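/- arXiv:2306.11188 — 6 statements merged into one kernel-verified Lean document; each statement's English description precedes it below -/
import Mathlib

section
/- Let (X,Y) be a random vector with joint CDF H and marginal CDFs F and G. Then (X,Y) is quasi-independent if and only if for all Borel sets A, B ⊆ ℝ: P(X ∈ A, Y ∈ B) + P(X ∈ B, Y ∈ A) = P(X ∈ A)·P(Y ∈ B) + P(X ∈ B)·P(Y ∈ A). -/
open MeasureTheory ProbabilityTheory

variable {Ω : Type*} [MeasurableSpace Ω]

/-- `(X,Y)` with joint CDF `H` and marginal CDFs `F`, `G` is quasi-independent if
`H(x,y) + H(y,x) = F(x)G(y) + F(y)G(x)` for all `x, y`. -/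
def QuasiIndep (μ : Measure Ω) (X Y : Ω → ℝ) : Prop :=
  ∀ x y : ℝ,
    (μ {ω | X ω ≤ x ∧ Y ω ≤ y}).toReal + (μ {ω | X ω ≤ y ∧ Y ω ≤ x}).toReal =
      (μ {ω | X ω ≤ x}).toReal * (μ {ω | Y ω ≤ y}).toReal +
        (μ {ω | X ω ≤ y}).toReal * (μ {ω | Y ω ≤ x}).toReal


/-- `(X,Y)` is quasi-independent iff for all Borel sets `A, B ⊆ ℝ`,
`P(X ∈ A, Y ∈ B) + P(X ∈ B, Y ∈ A) = P(X ∈ A)P(Y ∈ B) + P(X ∈ B)P(Y ∈ A)`. -/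
theorem quasiIndep_iff_sets
    (μ : Measure Ω) [IsProbabilityMeasure μ] (X Y : Ω → ℝ)
    (hXm : Measurable X) (hYm : Measurable Y) :
    QuasiIndep μ X Y ↔
      ∀ A B : Set ℝ, MeasurableSet A → MeasurableSet B →
        (μ {ω | X ω ∈ A ∧ Y ω ∈ B}).toReal + (μ {ω | X ω ∈ B ∧ Y ω ∈ A}).toReal =
          (μ {ω | X ω ∈ A}).toReal * (μ {ω | Y ω ∈ B}).toReal +
            (μ {ω | X ω ∈ B}).toReal * (μ {ω | Y ω ∈ A}).toReal := by
  have hset : ∀ (A B : Set ℝ), {ω | X ω ∈ A ∧ Y ω ∈ B} = X ⁻¹' A ∩ Y ⁻¹' B := fun A B => rfl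
  constructor
  · intro h A B hA hB
    -- ENNReal version of the hypothesis
    have h' : ∀ x y : ℝ,
        μ (X ⁻¹' Set.Iic x ∩ Y ⁻¹' Set.Iic y) + μ (X ⁻¹' Set.Iic y ∩ Y ⁻¹' Set.Iic x) =
          μ (X ⁻¹' Set.Iic x) * μ (Y ⁻¹' Set.Iic y) +
            μ (X ⁻¹' Set.Iic y) * μ (Y ⁻¹' Set.Iic x) := by
      intro x y
      have hh := h x y
      apply (ENNReal.toReal_eq_toReal_iff' (by finiteness) (by finiteness)).mp
      rw [ENNReal.toReal_add (by finiteness) (by finiteness),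
        ENNReal.toReal_add (by finiteness) (by finiteness),
        ENNReal.toReal_mul, ENNReal.toReal_mul]
      exact hh
    -- Step 1: extend to arbitrary Borel A, with B an interval Iic y
    have step1 : ∀ (y : ℝ) (A : Set ℝ), MeasurableSet A →
        μ (X ⁻¹' A ∩ Y ⁻¹' Set.Iic y) + μ (X ⁻¹' Set.Iic y ∩ Y ⁻¹' A) =
          μ (X ⁻¹' A) * μ (Y ⁻¹' Set.Iic y) + μ (X ⁻¹' Set.Iic y) * μ (Y ⁻¹' A) := by
      intro y A hA
      have hmeq :
          (Measure.map X (μ.restrict (Y ⁻¹' Set.Iic y)) +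
            Measure.map Y (μ.restrict (X ⁻¹' Set.Iic y)))
          = (μ (Y ⁻¹' Set.Iic y) • Measure.map X μ +
              μ (X ⁻¹' Set.Iic y) • Measure.map Y μ) := by
        apply Measure.ext_of_Iic
        intro x
        simp only [Measure.add_apply, Measure.map_apply hXm measurableSet_Iic,
          Measure.map_apply hYm measurableSet_Iic,
          Measure.restrict_apply (hXm measurableSet_Iic),
          Measure.restrict_apply (hYm measurableSet_Iic),
          Measure.smul_apply, smul_eq_mul]
        rw [Set.inter_comm (Y ⁻¹' Set.Iic x) (X ⁻¹' Set.Iic y),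
          mul_comm (μ (Y ⁻¹' Set.Iic y)) (μ (X ⁻¹' Set.Iic x)),
          mul_comm (μ (X ⁻¹' Set.Iic y)) (μ (Y ⁻¹' Set.Iic x)),
          mul_comm (μ (Y ⁻¹' Set.Iic x)) (μ (X ⁻¹' Set.Iic y))]
        exact h' x y
      have heval := congrArg (fun (m : Measure ℝ) => m A) hmeq
      simpa only [Measure.add_apply, Measure.map_apply hXm hA, Measure.map_apply hYm hA,
        Measure.restrict_apply (hXm hA), Measure.restrict_apply (hYm hA),
        Measure.smul_apply, smul_eq_mul, Set.inter_comm (Y ⁻¹' A) (X ⁻¹' Set.Iic y),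
        mul_comm (μ (Y ⁻¹' Set.Iic y)) (μ (X ⁻¹' A)),
        mul_comm (μ (X ⁻¹' Set.Iic y)) (μ (Y ⁻¹' A))] using heval
    -- Step 2: extend to arbitrary Borel B
    have step2 :
        μ (X ⁻¹' A ∩ Y ⁻¹' B) + μ (X ⁻¹' B ∩ Y ⁻¹' A) =
          μ (X ⁻¹' A) * μ (Y ⁻¹' B) + μ (X ⁻¹' B) * μ (Y ⁻¹' A) := by
      have hmeq :
          (Measure.map Y (μ.restrict (X ⁻¹' A)) + Measure.map X (μ.restrict (Y ⁻¹' A)))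
          = (μ (X ⁻¹' A) • Measure.map Y μ + μ (Y ⁻¹' A) • Measure.map X μ) := by
        apply Measure.ext_of_Iic
        intro y
        simp only [Measure.add_apply, Measure.map_apply hXm measurableSet_Iic,
          Measure.map_apply hYm measurableSet_Iic,
          Measure.restrict_apply (hXm measurableSet_Iic),
          Measure.restrict_apply (hYm measurableSet_Iic),
          Measure.smul_apply, smul_eq_mul]
        have hs := step1 y A hA
        rw [Set.inter_comm (X ⁻¹' A) (Y ⁻¹' Set.Iic y)] at hs
        exact hs.trans (by ring)
      have heval := congrArg (fun (m : Measure ℝ) => m B) hmeq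
      simpa only [Measure.add_apply, Measure.map_apply hXm hB, Measure.map_apply hYm hB,
        Measure.restrict_apply (hXm hB), Measure.restrict_apply (hYm hB),
        Measure.smul_apply, smul_eq_mul, Set.inter_comm (Y ⁻¹' B) (X ⁻¹' A),
        mul_comm (μ (X ⁻¹' A)) (μ (Y ⁻¹' B)),
        mul_comm (μ (Y ⁻¹' A)) (μ (X ⁻¹' B))] using heval
    rw [hset, hset]
    have := congrArg ENNReal.toReal step2
    rw [ENNReal.toReal_add (by finiteness) (by finiteness),
      ENNReal.toReal_add (by finiteness) (by finiteness),
      ENNReal.toReal_mul, ENNReal.toReal_mul] at this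
    exact this
  · intro h x y
    simpa using h (Set.Iic x) (Set.Iic y) measurableSet_Iic measurableSet_Iic
end

section
/- Let X and Y be real random variables with finite positive variance. Then (X,Y) ∈ IC_0 if and only if (X,Y) is quasi-independent. -/
open MeasureTheory ProbabilityTheory

variable {Ω : Type*} [MeasurableSpace Ω]

noncomputable def cov (μ : Measure Ω) (X Y : Ω → ℝ) : ℝ :=
  ∫ ω, (X ω - ∫ a, X a ∂μ) * (Y ω - ∫ a, Y a ∂μ) ∂μ

noncomputable def corr (μ : Measure Ω) (X Y : Ω → ℝ) : ℝ :=
  cov μ X Y / Real.sqrt (variance X μ * variance Y μ)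

def Admissible (μ : Measure Ω) (X Y : Ω → ℝ) (g : ℝ → ℝ) : Prop :=
  Measurable g ∧ MemLp (g ∘ X) 2 μ ∧ MemLp (g ∘ Y) 2 μ ∧
    0 < variance (g ∘ X) μ ∧ 0 < variance (g ∘ Y) μ

def IC (μ : Measure Ω) (X Y : Ω → ℝ) (r : ℝ) : Prop :=
  corr μ X Y = r ∧ ∀ g : ℝ → ℝ, Admissible μ X Y g → corr μ (g ∘ X) (g ∘ Y) = r

/-! With `c(x, y) = H(x, y) - F(x) G(y) = Cov(𝟙{X ≤ x}, 𝟙{Y ≤ y})`, the test function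
`𝟙_(-∞, x] + 𝟙_(-∞, y]` turns invariant zero correlation into
`c(x, x) + c(x, y) + c(y, x) + c(y, y) = 0`; the case `x = y` gives `c(x, x) = 0`, hence
`c(x, y) + c(y, x) = 0`, which is quasi-independence. A test function making `g(X)` or `g(Y)`
degenerate is not admissible, but then the covariance vanishes anyway.

Conversely, quasi-independence says that the symmetrised law of `(X, Y)` agrees with the
symmetrised product of its marginals on quadrants, hence everywhere. Integrating `g(u) g(v)`
against both gives `E[g(X) g(Y)] = E[g(X)] E[g(Y)]` for every square-integrable `g(X)`, `g(Y)`. -/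

open Set

lemma covariance_eq_zero_of_variance_eq_zero_left {μ : Measure Ω} [IsFiniteMeasure μ]
    {X : Ω → ℝ} (Y : Ω → ℝ) (hX : MemLp X 2 μ) (h : Var[X; μ] = 0) : cov[X, Y; μ] = 0 := by
  refine integral_eq_zero_of_ae ?_
  filter_upwards [ae_eq_integral_of_variance_eq_zero hX h] with ω hω
  simp [hω]

lemma covariance_eq_zero_of_variance_eq_zero_right {μ : Measure Ω} [IsFiniteMeasure μ]
    (X : Ω → ℝ) {Y : Ω → ℝ} (hY : MemLp Y 2 μ) (h : Var[Y; μ] = 0) : cov[X, Y; μ] = 0 := by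
  rw [covariance_comm, covariance_eq_zero_of_variance_eq_zero_left X hY h]

lemma cov_eq_zero_of_corr_eq_zero {μ : Measure Ω} {X Y : Ω → ℝ} (h : corr μ X Y = 0)
    (hX : 0 < Var[X; μ]) (hY : 0 < Var[Y; μ]) : cov μ X Y = 0 :=
  (div_eq_zero_iff.mp h).resolve_right (Real.sqrt_pos.mpr (mul_pos hX hY)).ne'

-- `cov μ X Y` unfolds to Mathlib's `cov[X, Y; μ]`, so the two are used interchangeably.
lemma IC.covariance_comp_eq_zero {μ : Measure Ω} [IsFiniteMeasure μ] {X Y : Ω → ℝ}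
    (h : IC μ X Y 0) {g : ℝ → ℝ} (hg : Measurable g) (hgX : MemLp (g ∘ X) 2 μ)
    (hgY : MemLp (g ∘ Y) 2 μ) : cov[g ∘ X, g ∘ Y; μ] = 0 := by
  rcases (variance_nonneg (g ∘ X) μ).eq_or_lt with hvX | hvX
  · exact covariance_eq_zero_of_variance_eq_zero_left _ hgX hvX.symm
  rcases (variance_nonneg (g ∘ Y) μ).eq_or_lt with hvY | hvY
  · exact covariance_eq_zero_of_variance_eq_zero_right _ hgY hvY.symm
  exact cov_eq_zero_of_corr_eq_zero (h.2 g ⟨hg, hgX, hgY, hvX, hvY⟩) hvX hvY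

lemma memLp_indicator_one {μ : Measure Ω} [IsFiniteMeasure μ] {s : Set Ω} (hs : MeasurableSet s)
    (p : ENNReal) : MemLp (s.indicator (1 : Ω → ℝ)) p μ :=
  memLp_indicator_const p hs 1 (.inr (measure_ne_top μ s))

lemma covariance_indicator_one {μ : Measure Ω} [IsProbabilityMeasure μ] {s t : Set Ω}
    (hs : MeasurableSet s) (ht : MeasurableSet t) :
    cov[s.indicator 1, t.indicator 1; μ] = μ.real (s ∩ t) - μ.real s * μ.real t := by
  rw [covariance_eq_sub (memLp_indicator_one hs 2) (memLp_indicator_one ht 2),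
    ← inter_indicator_one, integral_indicator_one (hs.inter ht), integral_indicator_one hs,
    integral_indicator_one ht]

lemma memLp_indicator_one_comp {μ : Measure Ω} [IsFiniteMeasure μ] {X : Ω → ℝ}
    (hX : Measurable X) {s : Set ℝ} (hs : MeasurableSet s) (p : ENNReal) :
    MemLp (s.indicator (1 : ℝ → ℝ) ∘ X) p μ :=
  memLp_indicator_one (hX hs) p

lemma covariance_indicator_Iic_comp {μ : Measure Ω} [IsProbabilityMeasure μ] {X Y : Ω → ℝ}
    (hX : Measurable X) (hY : Measurable Y) (x y : ℝ) :
    cov[(Iic x).indicator 1 ∘ X, (Iic y).indicator 1 ∘ Y; μ] =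
      (μ {ω | X ω ≤ x ∧ Y ω ≤ y}).toReal - (μ {ω | X ω ≤ x}).toReal * (μ {ω | Y ω ≤ y}).toReal :=
  covariance_indicator_one (hX measurableSet_Iic) (hY measurableSet_Iic)

lemma quasiIndep_iff_covariance_indicator_Iic {μ : Measure Ω} [IsProbabilityMeasure μ]
    {X Y : Ω → ℝ} (hX : Measurable X) (hY : Measurable Y) :
    QuasiIndep μ X Y ↔ ∀ x y : ℝ,
      cov[(Iic x).indicator 1 ∘ X, (Iic y).indicator 1 ∘ Y; μ] +
        cov[(Iic y).indicator 1 ∘ X, (Iic x).indicator 1 ∘ Y; μ] = 0 := by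
  simp only [covariance_indicator_Iic_comp hX hY]
  refine forall₂_congr fun x y => ?_
  constructor <;> intro h <;> linarith

theorem IC.quasiIndep {μ : Measure Ω} [IsProbabilityMeasure μ] {X Y : Ω → ℝ}
    (h : IC μ X Y 0) (hX : Measurable X) (hY : Measurable Y) : QuasiIndep μ X Y := by
  rw [quasiIndep_iff_covariance_indicator_Iic hX hY]
  intro x y
  set I : ℝ → ℝ → ℝ := fun a => (Iic a).indicator 1
  have hI : ∀ a, Measurable (I a) := fun a => measurable_one.indicator measurableSet_Iic
  have hIX : ∀ a, MemLp (I a ∘ X) 2 μ := fun a => memLp_indicator_one_comp hX measurableSet_Iic 2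
  have hIY : ∀ a, MemLp (I a ∘ Y) 2 μ := fun a => memLp_indicator_one_comp hY measurableSet_Iic 2
  have hdiag : ∀ a, cov[I a ∘ X, I a ∘ Y; μ] = 0 := fun a =>
    h.covariance_comp_eq_zero (hI a) (hIX a) (hIY a)
  have hsum : cov[(I x + I y) ∘ X, (I x + I y) ∘ Y; μ] = 0 :=
    h.covariance_comp_eq_zero ((hI x).add (hI y)) ((hIX x).add (hIX y)) ((hIY x).add (hIY y))
  rw [Pi.add_comp, Pi.add_comp, covariance_add_left (hIX x) (hIX y) ((hIY x).add (hIY y)),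
    covariance_add_right (hIX x) (hIY x) (hIY y), covariance_add_right (hIX y) (hIY x) (hIY y),
    hdiag x, hdiag y] at hsum
  linarith

lemma Measure.ext_of_Iic_prod_Iic {μ ν : Measure (ℝ × ℝ)} [IsFiniteMeasure μ]
    (h : ∀ a b : ℝ, μ (Iic a ×ˢ Iic b) = ν (Iic a ×ˢ Iic b)) : μ = ν := by
  have hspan : IsCountablySpanning (range (Iic : ℝ → Set ℝ)) :=
    ⟨fun n : ℕ => Iic (n : ℝ), fun n => mem_range_self _,
      iUnion_eq_univ_iff.mpr fun u => (exists_nat_ge u).imp fun _ hn => hn⟩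
  have hgen : (inferInstance : MeasurableSpace (ℝ × ℝ)) =
      MeasurableSpace.generateFrom (image2 (· ×ˢ ·) (range Iic) (range Iic)) := by
    rw [← generateFrom_prod_eq hspan hspan, ← borel_eq_generateFrom_Iic, ← BorelSpace.measurable_eq]
  have hmono : Monotone fun a : ℝ => Iic a ×ˢ Iic a := fun a b hab =>
    prod_mono (Iic_subset_Iic.mpr hab) (Iic_subset_Iic.mpr hab)
  have hunion : (⋃ a : ℝ, Iic a ×ˢ Iic a) = univ :=
    iUnion_eq_univ_iff.mpr fun z => ⟨max z.1 z.2, le_max_left z.1 z.2, le_max_right z.1 z.2⟩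
  refine ext_of_generate_finite _ hgen (isPiSystem_Iic.prod isPiSystem_Iic) ?_ ?_
  · rintro - ⟨-, ⟨a, rfl⟩, -, ⟨b, rfl⟩, rfl⟩
    exact h a b
  · rw [← hunion, hmono.measure_iUnion, hmono.measure_iUnion]
    simp only [h]

lemma QuasiIndep.map_add_map_swap_eq {μ : Measure Ω} [IsProbabilityMeasure μ] {X Y : Ω → ℝ}
    (h : QuasiIndep μ X Y) (hX : Measurable X) (hY : Measurable Y) :
    μ.map (fun ω => (X ω, Y ω)) + μ.map (fun ω => (Y ω, X ω)) =
      (μ.map X).prod (μ.map Y) + (μ.map Y).prod (μ.map X) := by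
  refine Measure.ext_of_Iic_prod_Iic fun a b => ?_
  have hrect : MeasurableSet (Iic a ×ˢ Iic b) := measurableSet_Iic.prod measurableSet_Iic
  have hswap : (fun ω => (Y ω, X ω)) ⁻¹' (Iic a ×ˢ Iic b) = {ω | X ω ≤ b ∧ Y ω ≤ a} := by
    ext ω; exact and_comm
  rw [Measure.add_apply, Measure.add_apply, Measure.map_apply (hX.prodMk hY) hrect,
    Measure.map_apply (hY.prodMk hX) hrect, hswap, Measure.prod_prod, Measure.prod_prod,
    Measure.map_apply hX measurableSet_Iic, Measure.map_apply hY measurableSet_Iic,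
    Measure.map_apply hX measurableSet_Iic, Measure.map_apply hY measurableSet_Iic,
    ← ENNReal.toReal_eq_toReal_iff' (by finiteness) (by finiteness),
    ENNReal.toReal_add (by finiteness) (by finiteness),
    ENNReal.toReal_add (by finiteness) (by finiteness), ENNReal.toReal_mul, ENNReal.toReal_mul,
    mul_comm (μ (Y ⁻¹' Iic a)).toReal]
  exact h a b

lemma integral_mul_comp_map_prodMk {μ : Measure Ω} {X Y : Ω → ℝ} (hX : Measurable X)
    (hY : Measurable Y) {g : ℝ → ℝ} (hg : Measurable g) :
    ∫ z, g z.1 * g z.2 ∂(μ.map fun ω => (X ω, Y ω)) = μ[g ∘ X * g ∘ Y] :=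
  integral_map (hX.prodMk hY).aemeasurable
    ((hg.comp measurable_fst).mul (hg.comp measurable_snd)).aestronglyMeasurable

lemma integral_mul_comp_map_prod_map {μ : Measure Ω} [IsFiniteMeasure μ] {X Y : Ω → ℝ}
    (hX : Measurable X) (hY : Measurable Y) {g : ℝ → ℝ} (hg : Measurable g) :
    ∫ z, g z.1 * g z.2 ∂((μ.map X).prod (μ.map Y)) = μ[g ∘ X] * μ[g ∘ Y] := by
  rw [integral_prod_mul g g, integral_map hX.aemeasurable hg.aestronglyMeasurable,
    integral_map hY.aemeasurable hg.aestronglyMeasurable]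
  rfl

lemma covariance_comp_eq_zero_of_map_add_map_swap_eq {μ : Measure Ω} [IsProbabilityMeasure μ]
    {X Y : Ω → ℝ} (hX : Measurable X) (hY : Measurable Y)
    (hlaw : μ.map (fun ω => (X ω, Y ω)) + μ.map (fun ω => (Y ω, X ω)) =
      (μ.map X).prod (μ.map Y) + (μ.map Y).prod (μ.map X))
    {g : ℝ → ℝ} (hg : Measurable g) (hgX : MemLp (g ∘ X) 2 μ) (hgY : MemLp (g ∘ Y) 2 μ) :
    cov[g ∘ X, g ∘ Y; μ] = 0 := by
  set φ : ℝ × ℝ → ℝ := fun z => g z.1 * g z.2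
  have hφ : Measurable φ := (hg.comp measurable_fst).mul (hg.comp measurable_snd)
  have hint : Integrable (g ∘ X * g ∘ Y) μ := hgX.integrable_mul hgY
  have hint_law : ∀ {Z W : Ω → ℝ}, Measurable Z → Measurable W →
      Integrable (g ∘ Z * g ∘ W) μ → Integrable φ (μ.map fun ω => (Z ω, W ω)) :=
    fun hZ hW h =>
      (integrable_map_measure hφ.aestronglyMeasurable (hZ.prodMk hW).aemeasurable).mpr h
  have hgX' : Integrable g (μ.map X) :=
    ((memLp_map_measure_iff hg.aestronglyMeasurable hX.aemeasurable).mpr hgX).integrable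
      one_le_two
  have hgY' : Integrable g (μ.map Y) :=
    ((memLp_map_measure_iff hg.aestronglyMeasurable hY.aemeasurable).mpr hgY).integrable
      one_le_two
  have key := congrArg (fun ν => ∫ z, φ z ∂ν) hlaw
  rw [integral_add_measure (hint_law hX hY hint) (hint_law hY hX (mul_comm (g ∘ X) _ ▸ hint)),
    integral_add_measure (hgX'.mul_prod hgY') (hgY'.mul_prod hgX'),
    integral_mul_comp_map_prodMk hX hY hg, integral_mul_comp_map_prodMk hY hX hg,
    integral_mul_comp_map_prod_map hX hY hg, integral_mul_comp_map_prod_map hY hX hg,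
    mul_comm (g ∘ Y)] at key
  rw [covariance_eq_sub hgX hgY]
  linarith

theorem QuasiIndep.ic_zero {μ : Measure Ω} [IsProbabilityMeasure μ] {X Y : Ω → ℝ}
    (h : QuasiIndep μ X Y) (hX : Measurable X) (hY : Measurable Y) (hX2 : MemLp X 2 μ)
    (hY2 : MemLp Y 2 μ) : IC μ X Y 0 := by
  have hcov {g : ℝ → ℝ} (hg : Measurable g) (hgX : MemLp (g ∘ X) 2 μ)
      (hgY : MemLp (g ∘ Y) 2 μ) : cov μ (g ∘ X) (g ∘ Y) = 0 :=
    covariance_comp_eq_zero_of_map_add_map_swap_eq hX hY (h.map_add_map_swap_eq hX hY) hg hgX hgY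
  refine ⟨?_, fun g ⟨hg, hgX, hgY, _, _⟩ => ?_⟩
  · rw [corr, show cov μ X Y = 0 from hcov measurable_id hX2 hY2, zero_div]
  · rw [corr, hcov hg hgX hgY, zero_div]

theorem ic_zero_iff_quasiIndep_general
    (μ : Measure Ω) [IsProbabilityMeasure μ] (X Y : Ω → ℝ)
    (hXm : Measurable X) (hYm : Measurable Y)
    (hX2 : MemLp X 2 μ) (hY2 : MemLp Y 2 μ) :
    IC μ X Y 0 ↔ QuasiIndep μ X Y :=
  ⟨fun h => h.quasiIndep hXm hYm, fun h => h.ic_zero hXm hYm hX2 hY2⟩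

/-- `(X,Y) ∈ IC_0` iff `(X,Y)` is quasi-independent. -/
theorem ic_zero_iff_quasiIndep
    (μ : Measure Ω) [IsProbabilityMeasure μ] (X Y : Ω → ℝ)
    (hXm : Measurable X) (hYm : Measurable Y)
    (hX2 : MemLp X 2 μ) (hY2 : MemLp Y 2 μ)
    (hvX : 0 < variance X μ) (hvY : 0 < variance Y μ) :
    IC μ X Y 0 ↔ QuasiIndep μ X Y :=
  ic_zero_iff_quasiIndep_general μ X Y hXm hYm hX2 hY2
end

section
/- Let X and Y be bi-atomic random variables with the same two-point support {a, b}, a < b. Then for every admissible function g, Corr(g(X), g(Y)) = Corr(X,Y); consequently (X,Y) ∈ IC (regardless of the dependence structure of (X,Y)). -/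
open MeasureTheory ProbabilityTheory

variable {Ω : Type*} [MeasurableSpace Ω]

/-- `X` is bi-atomic with support `{a, b}` (`a < b`). -/
def BiAtomic (μ : Measure Ω) (X : Ω → ℝ) (a b : ℝ) : Prop :=
  a < b ∧ 0 < μ {ω | X ω = a} ∧ 0 < μ {ω | X ω = b} ∧
    μ {ω | X ω = a} + μ {ω | X ω = b} = 1

/-!
On the two-point set `{a, b}` every function `g` agrees with the affine map `x ↦ s * x + c`
interpolating it at `a` and `b`. Hence `g ∘ X` and `g ∘ Y` are almost surely the same affine image
of `X` and `Y`; admissibility forces `s ≠ 0`, and correlation is invariant under a common affine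
change of scale with nonzero slope. That `Corr(X, Y) ∈ [-1, 1]` is the Cauchy–Schwarz inequality.
-/

variable {μ : Measure Ω} {X X' Y Y' : Ω → ℝ}

lemma cov_eq_covariance (μ : Measure Ω) (X Y : Ω → ℝ) : cov μ X Y = covariance X Y μ := rfl

lemma cov_congr_ae (hX : X =ᵐ[μ] X') (hY : Y =ᵐ[μ] Y') : cov μ X Y = cov μ X' Y' := by
  simp only [cov, integral_congr_ae hX, integral_congr_ae hY]
  refine integral_congr_ae ?_
  filter_upwards [hX, hY] with ω hXω hYω
  rw [hXω, hYω]

lemma corr_congr_ae (hX : X =ᵐ[μ] X') (hY : Y =ᵐ[μ] Y') : corr μ X Y = corr μ X' Y' := by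
  rw [corr, corr, cov_congr_ae hX hY, variance_congr hX, variance_congr hY]

lemma abs_cov_le_sqrt_variance_mul [IsFiniteMeasure μ] (hX : MemLp X 2 μ) (hY : MemLp Y 2 μ) :
    |cov μ X Y| ≤ √(variance X μ * variance Y μ) := by
  set F := fun ω => X ω - ∫ a, X a ∂μ
  set G := fun ω => Y ω - ∫ a, Y a ∂μ
  have hF : MemLp F (ENNReal.ofReal 2) μ := by
    rw [ENNReal.ofReal_ofNat]; exact hX.sub (memLp_const _)
  have hG : MemLp G (ENNReal.ofReal 2) μ := by
    rw [ENNReal.ofReal_ofNat]; exact hY.sub (memLp_const _)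
  have hVX : variance X μ = ∫ ω, ‖F ω‖ ^ (2 : ℝ) ∂μ := by
    simp [variance_eq_integral hX.aemeasurable, F]
  have hVY : variance Y μ = ∫ ω, ‖G ω‖ ^ (2 : ℝ) ∂μ := by
    simp [variance_eq_integral hY.aemeasurable, G]
  calc |cov μ X Y| = ‖∫ ω, F ω * G ω ∂μ‖ := (Real.norm_eq_abs _).symm
    _ ≤ ∫ ω, ‖F ω‖ * ‖G ω‖ ∂μ := by
        simpa only [norm_mul] using norm_integral_le_integral_norm (fun ω => F ω * G ω)
    _ ≤ (∫ ω, ‖F ω‖ ^ (2 : ℝ) ∂μ) ^ (1 / 2 : ℝ) * (∫ ω, ‖G ω‖ ^ (2 : ℝ) ∂μ) ^ (1 / 2 : ℝ) :=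
        integral_mul_norm_le_Lp_mul_Lq Real.HolderConjugate.two_two hF hG
    _ = √(variance X μ * variance Y μ) := by
        rw [hVX, hVY, Real.sqrt_mul (by positivity), Real.sqrt_eq_rpow, Real.sqrt_eq_rpow]

lemma corr_mem_Icc [IsFiniteMeasure μ] (hX : MemLp X 2 μ) (hY : MemLp Y 2 μ) :
    corr μ X Y ∈ Set.Icc (-1) 1 := by
  rw [Set.mem_Icc, ← abs_le, corr, abs_div, abs_of_nonneg (Real.sqrt_nonneg _)]
  exact div_le_one_of_le₀ (abs_cov_le_sqrt_variance_mul hX hY) (Real.sqrt_nonneg _)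

section Affine

variable [IsProbabilityMeasure μ]

lemma cov_affine (hX : Integrable X μ) (hY : Integrable Y μ) (s c t d : ℝ) :
    cov μ (fun ω => s * X ω + c) (fun ω => t * Y ω + d) = s * t * cov μ X Y := by
  simp only [cov_eq_covariance]
  rw [covariance_add_const_left (hX.const_mul s), covariance_add_const_right (hY.const_mul t),
    covariance_const_mul_left, covariance_const_mul_right]
  ring

lemma variance_affine (hX : AEStronglyMeasurable X μ) (s c : ℝ) :
    variance (fun ω => s * X ω + c) μ = s ^ 2 * variance X μ := by
  rw [variance_add_const (hX.const_mul s), variance_const_mul]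

lemma corr_affine (hX : Integrable X μ) (hY : Integrable Y μ) {s t : ℝ} (hst : 0 < s * t)
    (c d : ℝ) : corr μ (fun ω => s * X ω + c) (fun ω => t * Y ω + d) = corr μ X Y := by
  have hsqrt : √(s ^ 2 * variance X μ * (t ^ 2 * variance Y μ))
      = s * t * √(variance X μ * variance Y μ) := by
    rw [show s ^ 2 * variance X μ * (t ^ 2 * variance Y μ)
        = (s * t) ^ 2 * (variance X μ * variance Y μ) by ring,
      Real.sqrt_mul (sq_nonneg _), Real.sqrt_sq hst.le]
  rw [corr, corr, cov_affine hX hY, variance_affine hX.aestronglyMeasurable,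
    variance_affine hY.aestronglyMeasurable, hsqrt, mul_div_mul_left _ _ hst.ne']

end Affine

lemma comp_ae_eq_affine_of_ae_eq_or_eq {a b : ℝ} (hab : a ≠ b)
    (hX : ∀ᵐ ω ∂μ, X ω = a ∨ X ω = b) (g : ℝ → ℝ) :
    g ∘ X =ᵐ[μ] fun ω => slope g a b * X ω + (g a - slope g a b * a) := by
  have hslope : slope g a b * (b - a) = g b - g a := by
    rw [slope_def_field, div_mul_cancel₀ _ (sub_ne_zero.mpr hab.symm)]
  filter_upwards [hX] with ω hω
  rcases hω with h | h <;> simp only [Function.comp_apply, h] <;> linarith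

namespace BiAtomic

variable [IsProbabilityMeasure μ] {a b : ℝ}

lemma ae_eq_or_eq (hXm : Measurable X) (h : BiAtomic μ X a b) :
    ∀ᵐ ω ∂μ, X ω = a ∨ X ω = b := by
  have hA : MeasurableSet {ω | X ω = a} := hXm (measurableSet_singleton a)
  have hB : MeasurableSet {ω | X ω = b} := hXm (measurableSet_singleton b)
  have hdisj : Disjoint {ω | X ω = a} {ω | X ω = b} :=
    Set.disjoint_left.mpr fun ω (ha : X ω = a) (hb : X ω = b) => h.1.ne (ha.symm.trans hb)
  have hAB : MeasurableSet {ω | X ω = a ∨ X ω = b} := hA.union hB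
  refine (ae_iff_measure_eq hAB.nullMeasurableSet).mpr ?_
  rw [Set.ofPred_or, measure_union hdisj hB, h.2.2.2, measure_univ]

lemma memLp (hXm : Measurable X) (h : BiAtomic μ X a b) (p : ENNReal) : MemLp X p μ := by
  refine MemLp.of_bound hXm.aestronglyMeasurable (max |a| |b|) ?_
  filter_upwards [h.ae_eq_or_eq hXm] with ω hω
  rcases hω with hω | hω <;> simp [hω]

end BiAtomic

/-- If `X` and `Y` are bi-atomic with the same two-point support `{a,b}`,
then `Corr(g(X), g(Y)) = Corr(X,Y)` for every admissible `g`; consequently `(X,Y) ∈ IC`. -/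
theorem biatomic_same_support_ic
    (μ : Measure Ω) [IsProbabilityMeasure μ] (X Y : Ω → ℝ)
    (hXm : Measurable X) (hYm : Measurable Y)
    (a b : ℝ) (hX : BiAtomic μ X a b) (hY : BiAtomic μ Y a b) :
    (∀ g : ℝ → ℝ, Admissible μ X Y g → corr μ (g ∘ X) (g ∘ Y) = corr μ X Y) ∧
      ∃ r ∈ Set.Icc (-1 : ℝ) 1, IC μ X Y r := by
  have hXi : Integrable X μ := memLp_one_iff_integrable.mp (hX.memLp hXm 1)
  have hYi : Integrable Y μ := memLp_one_iff_integrable.mp (hY.memLp hYm 1)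
  have invariance : ∀ g, Admissible μ X Y g → corr μ (g ∘ X) (g ∘ Y) = corr μ X Y := by
    rintro g ⟨-, -, -, hgX, -⟩
    have hgX_affine := comp_ae_eq_affine_of_ae_eq_or_eq hX.1.ne (hX.ae_eq_or_eq hXm) g
    have hgY_affine := comp_ae_eq_affine_of_ae_eq_or_eq hX.1.ne (hY.ae_eq_or_eq hYm) g
    have hs : slope g a b ≠ 0 := by
      rintro hs0
      rw [variance_congr hgX_affine, variance_affine hXi.aestronglyMeasurable, hs0] at hgX
      simp at hgX
    rw [corr_congr_ae hgX_affine hgY_affine, corr_affine hXi hYi (mul_self_pos.mpr hs)]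
  exact ⟨invariance, corr μ X Y, corr_mem_Icc (hX.memLp hXm 2) (hY.memLp hYm 2), rfl, invariance⟩
end

section
/- Let X and Y be bi-atomic random variables. Then (X,Y) ∈ IC if and only if either (i) X and Y have the same two-point support, or (ii) X and Y are independent. -/
open MeasureTheory ProbabilityTheory

variable {Ω : Type*} [MeasurableSpace Ω]

section Helpers

variable {μ : Measure Ω} [IsProbabilityMeasure μ]

lemma integrable_ind (B : Set Ω) (hB : MeasurableSet B) :
    Integrable (B.indicator (fun _ => (1 : ℝ))) μ :=
  (integrable_const (1 : ℝ)).indicator hB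

lemma integral_ind (B : Set Ω) (hB : MeasurableSet B) :
    ∫ ω, B.indicator (fun _ => (1 : ℝ)) ω ∂μ = (μ B).toReal := by
  rw [integral_indicator_const (1 : ℝ) hB, smul_eq_mul, mul_one]; rfl

lemma integral_comb (B C : Set Ω) (hB : MeasurableSet B) (hC : MeasurableSet C)
    (k₀ k₁ k₂ k₃ : ℝ) :
    ∫ ω, (k₀ + k₁ * B.indicator (fun _ => (1:ℝ)) ω + k₂ * C.indicator (fun _ => (1:ℝ)) ω
          + k₃ * (B ∩ C).indicator (fun _ => (1:ℝ)) ω) ∂μ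
      = k₀ + k₁ * (μ B).toReal + k₂ * (μ C).toReal + k₃ * (μ (B ∩ C)).toReal := by
  have iB := integrable_ind (μ := μ) B hB
  have iC := integrable_ind (μ := μ) C hC
  have iBC := integrable_ind (μ := μ) (B ∩ C) (hB.inter hC)
  have i1 : Integrable (fun ω => k₁ * B.indicator (fun _ => (1:ℝ)) ω) μ := iB.const_mul k₁
  have i2 : Integrable (fun ω => k₂ * C.indicator (fun _ => (1:ℝ)) ω) μ := iC.const_mul k₂
  have i3 : Integrable (fun ω => k₃ * (B ∩ C).indicator (fun _ => (1:ℝ)) ω) μ :=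
    iBC.const_mul k₃
  have i01 : Integrable (fun ω => k₀ + k₁ * B.indicator (fun _ => (1:ℝ)) ω) μ := by
    exact (integrable_const k₀).add i1
  have i012 : Integrable (fun ω => k₀ + k₁ * B.indicator (fun _ => (1:ℝ)) ω
      + k₂ * C.indicator (fun _ => (1:ℝ)) ω) μ := by exact i01.add i2
  rw [integral_add i012 i3, integral_add i01 i2, integral_add (integrable_const k₀) i1,
    integral_const, integral_const_mul, integral_const_mul, integral_const_mul,
    integral_ind B hB, integral_ind C hC, integral_ind _ (hB.inter hC)]
  simp

lemma variance_congr' {f g : Ω → ℝ} (h : f =ᵐ[μ] g) : variance f μ = variance g μ := by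
  have hI : ∫ ω, f ω ∂μ = ∫ ω, g ω ∂μ := integral_congr_ae h
  unfold ProbabilityTheory.variance ProbabilityTheory.evariance
  rw [hI]
  congr 1
  apply lintegral_congr_ae
  filter_upwards [h] with ω hω
  rw [hω]

lemma cov_congr {f f' g g' : Ω → ℝ} (hf : f =ᵐ[μ] f') (hg : g =ᵐ[μ] g') :
    cov μ f g = cov μ f' g' := by
  have h1 : ∫ a, f a ∂μ = ∫ a, f' a ∂μ := integral_congr_ae hf
  have h2 : ∫ a, g a ∂μ = ∫ a, g' a ∂μ := integral_congr_ae hg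
  unfold cov
  apply integral_congr_ae
  filter_upwards [hf, hg] with ω e1 e2
  rw [e1, e2, h1, h2]

lemma memℒp_two_of_ae_two {f : Ω → ℝ} (hfm : AEStronglyMeasurable f μ) (x y : ℝ)
    (h : ∀ᵐ ω ∂μ, f ω = x ∨ f ω = y) : MemLp f 2 μ := by
  refine MemLp.of_bound hfm (max |x| |y|) ?_
  filter_upwards [h] with ω hω
  rcases hω with h | h <;> rw [Real.norm_eq_abs, h]
  exacts [le_max_left _ _, le_max_right _ _]

lemma memℒp_affine_ind (B : Set Ω) (hB : MeasurableSet B) (s t : ℝ) :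
    MemLp (fun ω => s + t * B.indicator (fun _ => (1:ℝ)) ω) 2 μ := by
  refine memℒp_two_of_ae_two ?_ s (s + t) (Filter.Eventually.of_forall fun ω => ?_)
  · exact (measurable_const.add ((measurable_one.indicator hB).const_mul t)).aestronglyMeasurable
  · by_cases hω : ω ∈ B
    · right; simp [Set.indicator_of_mem hω]
    · left; simp [Set.indicator_of_notMem hω]

lemma integral_affine_ind (B : Set Ω) (hB : MeasurableSet B) (s t : ℝ) :
    ∫ ω, (s + t * B.indicator (fun _ => (1:ℝ)) ω) ∂μ = s + t * (μ B).toReal := by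
  rw [integral_add (integrable_const s) ((integrable_ind B hB).const_mul t),
    integral_const, integral_const_mul, integral_ind B hB]
  simp

lemma variance_ind (B : Set Ω) (hB : MeasurableSet B) (s t : ℝ) :
    variance (fun ω => s + t * B.indicator (fun _ => (1:ℝ)) ω) μ
      = t ^ 2 * ((μ B).toReal * (1 - (μ B).toReal)) := by
  have hmem := memℒp_affine_ind (μ := μ) B hB s t
  rw [variance_eq_sub hmem]
  have h2 : ((fun ω => s + t * B.indicator (fun _ => (1:ℝ)) ω) ^ 2 : Ω → ℝ)
      =ᵐ[μ] fun ω => (s ^ 2 + (2 * s * t + t ^ 2) * B.indicator (fun _ => (1:ℝ)) ω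
          + (0:ℝ) * B.indicator (fun _ => (1:ℝ)) ω
          + (0:ℝ) * (B ∩ B).indicator (fun _ => (1:ℝ)) ω) := by
    apply Filter.Eventually.of_forall
    intro ω
    simp only [Pi.pow_apply]
    by_cases hω : ω ∈ B
    · have hω' : ω ∈ B ∩ B := ⟨hω, hω⟩
      simp only [Set.indicator_of_mem hω, Set.indicator_of_mem hω']
      ring
    · have hω' : ω ∉ B ∩ B := fun h => hω h.1
      simp only [Set.indicator_of_notMem hω, Set.indicator_of_notMem hω']
      ring
  have e2 : (∫ ω, ((fun ω => s + t * B.indicator (fun _ => (1:ℝ)) ω) ^ 2 : Ω → ℝ) ω ∂μ)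
      = s ^ 2 + (2 * s * t + t ^ 2) * (μ B).toReal + 0 * (μ B).toReal
        + 0 * (μ (B ∩ B)).toReal := by
    rw [integral_congr_ae h2, integral_comb B B hB hB]
  have e1 : (∫ ω, (s + t * B.indicator (fun _ => (1:ℝ)) ω) ∂μ) = s + t * (μ B).toReal :=
    integral_affine_ind B hB s t
  show (∫ ω, ((fun ω => s + t * B.indicator (fun _ => (1:ℝ)) ω) ^ 2 : Ω → ℝ) ω ∂μ)
      - (∫ ω, (s + t * B.indicator (fun _ => (1:ℝ)) ω) ∂μ) ^ 2 = _
  rw [e2, e1]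
  ring

lemma cov_ind (B C : Set Ω) (hB : MeasurableSet B) (hC : MeasurableSet C) (s t s' t' : ℝ) :
    cov μ (fun ω => s + t * B.indicator (fun _ => (1:ℝ)) ω)
        (fun ω => s' + t' * C.indicator (fun _ => (1:ℝ)) ω)
      = t * t' * ((μ (B ∩ C)).toReal - (μ B).toReal * (μ C).toReal) := by
  have hEf := integral_affine_ind (μ := μ) B hB s t
  have hEg := integral_affine_ind (μ := μ) C hC s' t'
  unfold cov
  have hpt : (fun ω => ((s + t * B.indicator (fun _ => (1:ℝ)) ω)
        - ∫ a, (s + t * B.indicator (fun _ => (1:ℝ)) a) ∂μ)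
        * ((s' + t' * C.indicator (fun _ => (1:ℝ)) ω)
        - ∫ a, (s' + t' * C.indicator (fun _ => (1:ℝ)) a) ∂μ))
      =ᵐ[μ] fun ω => ((t * t' * (μ B).toReal * (μ C).toReal)
          + (-(t * t' * (μ C).toReal)) * B.indicator (fun _ => (1:ℝ)) ω
          + (-(t * t' * (μ B).toReal)) * C.indicator (fun _ => (1:ℝ)) ω
          + (t * t') * (B ∩ C).indicator (fun _ => (1:ℝ)) ω) := by
    apply Filter.Eventually.of_forall
    intro ω
    simp only [hEf, hEg]
    by_cases h1 : ω ∈ B <;> by_cases h2 : ω ∈ C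
    · have h3 : ω ∈ B ∩ C := ⟨h1, h2⟩
      simp only [Set.indicator_of_mem h1, Set.indicator_of_mem h2, Set.indicator_of_mem h3]
      ring
    · have h3 : ω ∉ B ∩ C := fun h => h2 h.2
      simp only [Set.indicator_of_mem h1, Set.indicator_of_notMem h2,
        Set.indicator_of_notMem h3]
      ring
    · have h3 : ω ∉ B ∩ C := fun h => h1 h.1
      simp only [Set.indicator_of_notMem h1, Set.indicator_of_mem h2,
        Set.indicator_of_notMem h3]
      ring
    · have h3 : ω ∉ B ∩ C := fun h => h1 h.1
      simp only [Set.indicator_of_notMem h1, Set.indicator_of_notMem h2,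
        Set.indicator_of_notMem h3]
      ring
  rw [integral_congr_ae hpt, integral_comb B C hB hC]
  ring

lemma corr_ind {f g : Ω → ℝ} (B C : Set Ω) (hB : MeasurableSet B) (hC : MeasurableSet C)
    (s t s' t' : ℝ)
    (hf : f =ᵐ[μ] fun ω => s + t * B.indicator (fun _ => (1:ℝ)) ω)
    (hg : g =ᵐ[μ] fun ω => s' + t' * C.indicator (fun _ => (1:ℝ)) ω) :
    corr μ f g = (t * t' / |t * t'|)
      * (((μ (B ∩ C)).toReal - (μ B).toReal * (μ C).toReal)
        / Real.sqrt (((μ B).toReal * (1 - (μ B).toReal))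
          * ((μ C).toReal * (1 - (μ C).toReal)))) := by
  unfold corr
  rw [cov_congr hf hg, variance_congr' hf, variance_congr' hg, cov_ind B C hB hC,
    variance_ind B hB, variance_ind C hC]
  set p := (μ B).toReal
  set q := (μ C).toReal
  set m := (μ (B ∩ C)).toReal
  have h1 : t ^ 2 * (p * (1 - p)) * (t' ^ 2 * (q * (1 - q)))
      = (t * t') ^ 2 * ((p * (1 - p)) * (q * (1 - q))) := by ring
  rw [h1, Real.sqrt_mul (sq_nonneg (t * t')), Real.sqrt_sq_eq_abs, mul_div_mul_comm]

end Helpers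

section BiAtomicHelpers

variable {μ : Measure Ω} [IsProbabilityMeasure μ] {X : Ω → ℝ} {a b : ℝ}

lemma BiAtomic.ae (hXm : Measurable X) (h : BiAtomic μ X a b) :
    ∀ᵐ ω ∂μ, X ω = a ∨ X ω = b := by
  obtain ⟨hab, ha, hb, hsum⟩ := h
  have hA : MeasurableSet {ω | X ω = a} := hXm (measurableSet_singleton a)
  have hBs : MeasurableSet {ω | X ω = b} := hXm (measurableSet_singleton b)
  have hdisj : Disjoint {ω | X ω = a} {ω | X ω = b} :=
    Set.disjoint_left.2 fun ω h1 h2 => hab.ne (h1.symm.trans h2)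
  have hU : μ ({ω | X ω = a} ∪ {ω | X ω = b}) = 1 := by
    rw [measure_union hdisj hBs, hsum]
  have hcompl : μ (({ω | X ω = a} ∪ {ω | X ω = b})ᶜ) = 0 := by
    rw [measure_compl (hA.union hBs) (measure_ne_top _ _), hU, measure_univ, tsub_self]
  rw [ae_iff]
  have hset : {ω | ¬(X ω = a ∨ X ω = b)} = ({ω | X ω = a} ∪ {ω | X ω = b})ᶜ := by
    ext ω; simp [not_or]
  rw [hset]; exact hcompl

lemma BiAtomic.comp_ae (hXm : Measurable X) (h : BiAtomic μ X a b) (g : ℝ → ℝ) :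
    (g ∘ X) =ᵐ[μ] fun ω =>
      g a + (g b - g a) * ({ω | X ω = b} : Set Ω).indicator (fun _ => (1:ℝ)) ω := by
  filter_upwards [h.ae hXm] with ω hω
  rcases hω with h1 | h1
  · have hnot : ω ∉ {ω | X ω = b} := fun hh => h.1.ne (h1.symm.trans hh)
    simp [Function.comp, h1, Set.indicator_of_notMem hnot]
  · have hmem : ω ∈ {ω | X ω = b} := h1
    simp only [Function.comp_apply, h1, Set.indicator_of_mem hmem]
    ring

lemma BiAtomic.self_ae (hXm : Measurable X) (h : BiAtomic μ X a b) :
    X =ᵐ[μ] fun ω =>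
      a + (b - a) * ({ω | X ω = b} : Set Ω).indicator (fun _ => (1:ℝ)) ω := by
  filter_upwards [h.ae hXm] with ω hω
  rcases hω with h1 | h1
  · have hnot : ω ∉ {ω | X ω = b} := fun hh => h.1.ne (h1.symm.trans hh)
    simp [h1, Set.indicator_of_notMem hnot]
  · have hmem : ω ∈ {ω | X ω = b} := h1
    simp only [h1, Set.indicator_of_mem hmem]
    ring

lemma BiAtomic.p_pos (h : BiAtomic μ X a b) : 0 < (μ {ω | X ω = b}).toReal :=
  ENNReal.toReal_pos h.2.2.1.ne' (measure_ne_top _ _)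

lemma BiAtomic.p_lt_one (h : BiAtomic μ X a b) : (μ {ω | X ω = b}).toReal < 1 := by
  obtain ⟨hab, ha, hb, hsum⟩ := h
  have h1 : (μ {ω | X ω = a}).toReal + (μ {ω | X ω = b}).toReal = 1 := by
    rw [← ENNReal.toReal_add (measure_ne_top _ _) (measure_ne_top _ _), hsum]; simp
  have h2 := ENNReal.toReal_pos ha.ne' (measure_ne_top μ {ω | X ω = a})
  linarith

lemma BiAtomic.var_comp (hXm : Measurable X) (h : BiAtomic μ X a b) (g : ℝ → ℝ) :
    variance (g ∘ X) μ = (g b - g a) ^ 2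
      * ((μ {ω | X ω = b}).toReal * (1 - (μ {ω | X ω = b}).toReal)) := by
  have hBm : MeasurableSet {ω | X ω = b} := hXm (measurableSet_singleton b)
  rw [variance_congr' (h.comp_ae hXm g), variance_ind _ hBm]

lemma BiAtomic.var_pos (hXm : Measurable X) (h : BiAtomic μ X a b) {g : ℝ → ℝ}
    (hg : g a ≠ g b) : 0 < variance (g ∘ X) μ := by
  rw [h.var_comp hXm g]
  exact mul_pos (pow_two_pos_of_ne_zero (sub_ne_zero.2 (Ne.symm hg)))
    (mul_pos h.p_pos (by linarith [h.p_lt_one]))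

lemma BiAtomic.slope_ne (hXm : Measurable X) (h : BiAtomic μ X a b) {g : ℝ → ℝ}
    (hv : 0 < variance (g ∘ X) μ) : g b - g a ≠ 0 := by
  intro h0
  rw [h.var_comp hXm g, h0] at hv
  norm_num at hv

lemma admissible_of {Y : Ω → ℝ} {c d : ℝ} (hXm : Measurable X) (hYm : Measurable Y)
    (hX : BiAtomic μ X a b) (hY : BiAtomic μ Y c d) {g : ℝ → ℝ} (hgm : Measurable g)
    (h1 : g a ≠ g b) (h2 : g c ≠ g d) : Admissible μ X Y g := by
  refine ⟨hgm, ?_, ?_, hX.var_pos hXm h1, hY.var_pos hYm h2⟩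
  · refine memℒp_two_of_ae_two ((hgm.comp hXm).aestronglyMeasurable) (g a) (g b) ?_
    filter_upwards [hX.ae hXm] with ω hω
    rcases hω with h | h <;> simp [Function.comp, h]
  · refine memℒp_two_of_ae_two ((hgm.comp hYm).aestronglyMeasurable) (g c) (g d) ?_
    filter_upwards [hY.ae hYm] with ω hω
    rcases hω with h | h <;> simp [Function.comp, h]

end BiAtomicHelpers

section Indep

variable {μ : Measure Ω} [IsProbabilityMeasure μ]

lemma indep_of_product {X Y : Ω → ℝ} {a b c d : ℝ} (hXm : Measurable X) (hYm : Measurable Y)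
    (hX : BiAtomic μ X a b) (hY : BiAtomic μ Y c d)
    (h : μ ({ω | X ω = b} ∩ {ω | Y ω = d}) = μ {ω | X ω = b} * μ {ω | Y ω = d}) :
    IndepFun X Y μ := by
  classical
  set A := {ω | X ω = a} with hA
  set B := {ω | X ω = b} with hB
  set C := {ω | Y ω = c} with hC
  set D := {ω | Y ω = d} with hD
  have mA : MeasurableSet A := hXm (measurableSet_singleton a)
  have mB : MeasurableSet B := hXm (measurableSet_singleton b)
  have mC : MeasurableSet C := hYm (measurableSet_singleton c)
  have mD : MeasurableSet D := hYm (measurableSet_singleton d)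
  have dAB : Disjoint A B := Set.disjoint_left.2 fun ω h1 h2 => hX.1.ne (h1.symm.trans h2)
  have dCD : Disjoint C D := Set.disjoint_left.2 fun ω h1 h2 => hY.1.ne (h1.symm.trans h2)
  have hsY : μ C + μ D = 1 := hY.2.2.2
  have hUX : (A ∪ B : Set Ω) =ᵐ[μ] (Set.univ : Set Ω) := by
    rw [Filter.eventuallyEq_set]
    filter_upwards [hX.ae hXm] with ω hω
    simpa [hA, hB] using hω
  have hUY : (C ∪ D : Set Ω) =ᵐ[μ] (Set.univ : Set Ω) := by
    rw [Filter.eventuallyEq_set]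
    filter_upwards [hY.ae hYm] with ω hω
    simpa [hC, hD] using hω
  have hinterY : ∀ (E : Set Ω), MeasurableSet E → μ (E ∩ C) + μ (E ∩ D) = μ E := by
    intro E mE
    rw [← measure_union (dCD.mono Set.inter_subset_right Set.inter_subset_right) (mE.inter mD),
      ← Set.inter_union_distrib_left]
    calc μ (E ∩ (C ∪ D)) = μ (E ∩ Set.univ) :=
            measure_congr (MeasureTheory.ae_eq_set_inter (Filter.EventuallyEq.refl _ _) hUY)
      _ = μ E := by rw [Set.inter_univ]
  have hinterX : ∀ (F : Set Ω), MeasurableSet F → μ (A ∩ F) + μ (B ∩ F) = μ F := by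
    intro F mF
    rw [← measure_union (dAB.mono Set.inter_subset_left Set.inter_subset_left) (mB.inter mF),
      ← Set.union_inter_distrib_right]
    calc μ ((A ∪ B) ∩ F) = μ (Set.univ ∩ F) :=
            measure_congr (MeasureTheory.ae_eq_set_inter hUX (Filter.EventuallyEq.refl _ _))
      _ = μ F := by rw [Set.univ_inter]
  have hsX : μ A + μ B = 1 := hX.2.2.2
  have step1 : μ (B ∩ C) = μ B * μ C := by
    have e : μ (B ∩ C) + μ (B ∩ D) = μ B * μ C + μ (B ∩ D) := by
      rw [hinterY B mB, h, ← mul_add, hsY, mul_one]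
    rw [add_comm (μ (B ∩ C)), add_comm (μ B * μ C)] at e
    exact (ENNReal.add_right_inj (measure_ne_top μ _)).1 e
  have step2 : μ (A ∩ D) = μ A * μ D := by
    have e : μ (A ∩ D) + μ (B ∩ D) = μ A * μ D + μ (B ∩ D) := by
      rw [hinterX D mD, h, ← add_mul, hsX, one_mul]
    rw [add_comm (μ (A ∩ D)), add_comm (μ A * μ D)] at e
    exact (ENNReal.add_right_inj (measure_ne_top μ _)).1 e
  have step3 : μ (A ∩ C) = μ A * μ C := by
    have e : μ (A ∩ C) + μ (A ∩ D) = μ A * μ C + μ (A ∩ D) := by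
      rw [hinterY A mA, step2, ← mul_add, hsY, mul_one]
    rw [add_comm (μ (A ∩ C)), add_comm (μ A * μ C)] at e
    exact (ENNReal.add_right_inj (measure_ne_top μ _)).1 e
  have col : ∀ F : Set Ω, MeasurableSet F → μ (A ∩ F) = μ A * μ F → μ (B ∩ F) = μ B * μ F →
      μ ((A ∪ B) ∩ F) = μ (A ∪ B) * μ F := by
    intro F mF h1 h2
    rw [Set.union_inter_distrib_right,
      measure_union (dAB.mono Set.inter_subset_left Set.inter_subset_left) (mB.inter mF),
      h1, h2, measure_union dAB mB, add_mul]
  have row : ∀ E : Set Ω, MeasurableSet E → μ (E ∩ C) = μ E * μ C → μ (E ∩ D) = μ E * μ D →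
      ∀ F : Set Ω, (F = ∅ ∨ F = C ∨ F = D ∨ F = C ∪ D) → μ (E ∩ F) = μ E * μ F := by
    rintro E mE h1 h2 F (rfl | rfl | rfl | rfl)
    · simp
    · exact h1
    · exact h2
    · rw [Set.inter_union_distrib_left,
        measure_union (dCD.mono Set.inter_subset_right Set.inter_subset_right) (mE.inter mD),
        h1, h2, measure_union dCD mD, mul_add]
  have main : ∀ E F : Set Ω, (E = ∅ ∨ E = A ∨ E = B ∨ E = A ∪ B) →
      (F = ∅ ∨ F = C ∨ F = D ∨ F = C ∪ D) → μ (E ∩ F) = μ E * μ F := by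
    rintro E F (rfl | rfl | rfl | rfl) hF
    · simp
    · exact row A mA step3 step2 F hF
    · exact row B mB step1 h F hF
    · exact row _ (mA.union mB) (col C mC step3 step1) (col D mD step2 h) F hF
  have hpre : ∀ s : Set ℝ,
      X ⁻¹' s =ᵐ[μ] (((if a ∈ s then A else (∅ : Set Ω)) ∪ (if b ∈ s then B else (∅ : Set Ω)) : Set Ω)) := by
    intro s
    rw [Filter.eventuallyEq_set]
    filter_upwards [hX.ae hXm] with ω hω
    rcases hω with h1 | h1 <;> by_cases has : a ∈ s <;> by_cases hbs : b ∈ s <;>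
      simp [Set.mem_preimage, hA, hB, h1, has, hbs, hX.1.ne, hX.1.ne']
  have hpreY : ∀ t : Set ℝ,
      Y ⁻¹' t =ᵐ[μ] (((if c ∈ t then C else (∅ : Set Ω)) ∪ (if d ∈ t then D else (∅ : Set Ω)) : Set Ω)) := by
    intro t
    rw [Filter.eventuallyEq_set]
    filter_upwards [hY.ae hYm] with ω hω
    rcases hω with h1 | h1 <;> by_cases hct : c ∈ t <;> by_cases hdt : d ∈ t <;>
      simp [Set.mem_preimage, hC, hD, h1, hct, hdt, hY.1.ne, hY.1.ne']
  rw [indepFun_iff_measure_inter_preimage_eq_mul]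
  intro s t _ _
  rw [measure_congr (MeasureTheory.ae_eq_set_inter (hpre s) (hpreY t)),
    measure_congr (hpre s), measure_congr (hpreY t)]
  refine main _ _ ?_ ?_
  · by_cases has : a ∈ s <;> by_cases hbs : b ∈ s
    · right; right; right; simp [has, hbs]
    · right; left; simp [has, hbs]
    · right; right; left; simp [has, hbs]
    · left; simp [has, hbs]
  · by_cases hct : c ∈ t <;> by_cases hdt : d ∈ t
    · right; right; right; simp [hct, hdt]
    · right; left; simp [hct, hdt]
    · right; right; left; simp [hct, hdt]
    · left; simp [hct, hdt]

end Indep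

lemma exists_flip {a b c d : ℝ} (hab : a < b) (hcd : c < d) (h : ¬(a = c ∧ b = d)) :
    ∃ g : ℝ → ℝ, Measurable g ∧ (g b - g a) * (g d - g c) < 0 := by
  by_cases hbd : b = d
  · have hac : a ≠ c := fun h' => h ⟨h', hbd⟩
    refine ⟨fun x => if x = a then b + 1 else x, ?_, ?_⟩
    · exact Measurable.ite measurableSet_eq measurable_const measurable_id
    · have hba : b ≠ a := hab.ne'
      have hca : c ≠ a := hac.symm
      have hda : d ≠ a := (hab.trans_eq hbd).ne'
      simp [hba, hca, hda]
      nlinarith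
  · by_cases hbc : b = c
    · refine ⟨fun x => if x = d then c - 1 else x, ?_, ?_⟩
      · exact Measurable.ite measurableSet_eq measurable_const measurable_id
      · have had : a ≠ d := (hab.trans (hbc ▸ hcd : b < d)).ne
        have hcd' : c ≠ d := hcd.ne
        simp [had, hcd', hbd]
        nlinarith
    · refine ⟨fun x => if x = b then a - 1 else x, ?_, ?_⟩
      · exact Measurable.ite measurableSet_eq measurable_const measurable_id
      · have hab' : a ≠ b := hab.ne
        have hcb : c ≠ b := fun h' => hbc h'.symm
        have hdb : d ≠ b := fun h' => hbd h'.symm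
        simp [hab', hcb, hdb]
        nlinarith

lemma key_ineq (p q m : ℝ) (hp0 : 0 < p) (hp1 : p < 1) (hm0 : 0 ≤ m) (hmp : m ≤ p)
    (hmq : m ≤ q) (hs : p + q ≤ 1 + m) : (m - p * q) ^ 2 ≤ (p * (1 - p)) * (q * (1 - q)) := by
  nlinarith [mul_nonneg (sub_nonneg.2 hmp) (sub_nonneg.2 hmq),
    mul_nonneg hm0 (by linarith : (0:ℝ) ≤ 1 + m - p - q),
    mul_nonneg (mul_nonneg (sub_nonneg.2 hmp) (sub_nonneg.2 hmq))
      (mul_nonneg hm0 (by linarith : (0:ℝ) ≤ 1 + m - p - q)),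
    sq_nonneg (m - p * q), sq_nonneg (m * (1 + m - p - q) - (p - m) * (q - m))]

section Corr

variable {μ : Measure Ω} [IsProbabilityMeasure μ] {X Y : Ω → ℝ} {a b c d : ℝ}

lemma corr_comp' (hXm : Measurable X) (hYm : Measurable Y)
    (hX : BiAtomic μ X a b) (hY : BiAtomic μ Y c d) (g : ℝ → ℝ) :
    corr μ (g ∘ X) (g ∘ Y)
      = ((g b - g a) * (g d - g c)) / |(g b - g a) * (g d - g c)|
        * (((μ ({ω | X ω = b} ∩ {ω | Y ω = d})).toReal
            - (μ {ω | X ω = b}).toReal * (μ {ω | Y ω = d}).toReal)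
          / Real.sqrt (((μ {ω | X ω = b}).toReal * (1 - (μ {ω | X ω = b}).toReal))
            * ((μ {ω | Y ω = d}).toReal * (1 - (μ {ω | Y ω = d}).toReal)))) := by
  have hBm : MeasurableSet {ω | X ω = b} := hXm (measurableSet_singleton b)
  have hDm : MeasurableSet {ω | Y ω = d} := hYm (measurableSet_singleton d)
  exact corr_ind _ _ hBm hDm _ _ _ _ (hX.comp_ae hXm g) (hY.comp_ae hYm g)

lemma corr_self' (hXm : Measurable X) (hYm : Measurable Y)
    (hX : BiAtomic μ X a b) (hY : BiAtomic μ Y c d) :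
    corr μ X Y
      = ((b - a) * (d - c)) / |(b - a) * (d - c)|
        * (((μ ({ω | X ω = b} ∩ {ω | Y ω = d})).toReal
            - (μ {ω | X ω = b}).toReal * (μ {ω | Y ω = d}).toReal)
          / Real.sqrt (((μ {ω | X ω = b}).toReal * (1 - (μ {ω | X ω = b}).toReal))
            * ((μ {ω | Y ω = d}).toReal * (1 - (μ {ω | Y ω = d}).toReal)))) := by
  have hBm : MeasurableSet {ω | X ω = b} := hXm (measurableSet_singleton b)
  have hDm : MeasurableSet {ω | Y ω = d} := hYm (measurableSet_singleton d)
  exact corr_ind _ _ hBm hDm _ _ _ _ (hX.self_ae hXm) (hY.self_ae hYm)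

lemma ic_of_same_support (hXm : Measurable X) (hYm : Measurable Y) (u v : ℝ)
    (hXu : BiAtomic μ X u v) (hYu : BiAtomic μ Y u v) :
    ∃ r ∈ Set.Icc (-1 : ℝ) 1, IC μ X Y r := by
  have huv : u < v := hXu.1
  have hpos : 0 < (v - u) * (v - u) := mul_pos (sub_pos.2 huv) (sub_pos.2 huv)
  have hfac : ((v - u) * (v - u)) / |(v - u) * (v - u)| = 1 := by
    rw [abs_of_pos hpos, div_self hpos.ne']
  have hself := corr_self' hXm hYm hXu hYu
  rw [hfac, one_mul] at hself
  have hp0 := hXu.p_pos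
  have hp1 := hXu.p_lt_one
  have hq0 := hYu.p_pos
  have hq1 := hYu.p_lt_one
  have hm0 : (0:ℝ) ≤ (μ ({ω | X ω = v} ∩ {ω | Y ω = v})).toReal := ENNReal.toReal_nonneg
  have hmp : (μ ({ω | X ω = v} ∩ {ω | Y ω = v})).toReal ≤ (μ {ω | X ω = v}).toReal :=
    ENNReal.toReal_mono (measure_ne_top _ _) (measure_mono Set.inter_subset_left)
  have hmq : (μ ({ω | X ω = v} ∩ {ω | Y ω = v})).toReal ≤ (μ {ω | Y ω = v}).toReal :=
    ENNReal.toReal_mono (measure_ne_top _ _) (measure_mono Set.inter_subset_right)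
  have hsum : (μ {ω | X ω = v}).toReal + (μ {ω | Y ω = v}).toReal
      ≤ 1 + (μ ({ω | X ω = v} ∩ {ω | Y ω = v})).toReal := by
    have h1 : μ ({ω | X ω = v} ∪ {ω | Y ω = v}) + μ ({ω | X ω = v} ∩ {ω | Y ω = v})
        = μ {ω | X ω = v} + μ {ω | Y ω = v} :=
      measure_union_add_inter _ (hYm (measurableSet_singleton v))
    have h2 := congrArg ENNReal.toReal h1
    rw [ENNReal.toReal_add (measure_ne_top _ _) (measure_ne_top _ _),
      ENNReal.toReal_add (measure_ne_top _ _) (measure_ne_top _ _)] at h2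
    have h3 : (μ ({ω | X ω = v} ∪ {ω | Y ω = v})).toReal ≤ 1 := by
      simpa using ENNReal.toReal_mono ENNReal.one_ne_top
        (prob_le_one (μ := μ) (s := {ω | X ω = v} ∪ {ω | Y ω = v}))
    linarith
  have key := key_ineq _ _ _ hp0 hp1 hm0 hmp hmq hsum
  have hDpos : (0:ℝ) < Real.sqrt (((μ {ω | X ω = v}).toReal * (1 - (μ {ω | X ω = v}).toReal))
      * ((μ {ω | Y ω = v}).toReal * (1 - (μ {ω | Y ω = v}).toReal))) :=
    Real.sqrt_pos.2 (mul_pos (mul_pos hp0 (by linarith)) (mul_pos hq0 (by linarith)))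
  have habs : |corr μ X Y| ≤ 1 := by
    rw [hself, abs_div, abs_of_pos hDpos]
    rw [div_le_one hDpos, ← Real.sqrt_sq_eq_abs]
    exact Real.sqrt_le_sqrt key
  refine ⟨corr μ X Y, Set.mem_Icc.2 (abs_le.1 habs), rfl, ?_⟩
  intro g hadm
  obtain ⟨hgm, _, _, hvX, hvY⟩ := hadm
  have h1 : g v - g u ≠ 0 := hXu.slope_ne hXm hvX
  have hpos2 : 0 < (g v - g u) * (g v - g u) := mul_self_pos.2 h1
  have hfac2 : ((g v - g u) * (g v - g u)) / |(g v - g u) * (g v - g u)| = 1 := by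
    rw [abs_of_pos hpos2, div_self hpos2.ne']
  rw [corr_comp' hXm hYm hXu hYu g, hfac2, one_mul, hself]

lemma ic_of_indep (hXm : Measurable X) (hYm : Measurable Y)
    (hX : BiAtomic μ X a b) (hY : BiAtomic μ Y c d) (hind : IndepFun X Y μ) :
    ∃ r ∈ Set.Icc (-1 : ℝ) 1, IC μ X Y r := by
  have hpr := hind.measure_inter_preimage_eq_mul {b} {d} (measurableSet_singleton b)
    (measurableSet_singleton d)
  have hz : (μ ({ω | X ω = b} ∩ {ω | Y ω = d})).toReal
      - (μ {ω | X ω = b}).toReal * (μ {ω | Y ω = d}).toReal = 0 := by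
    have : μ ({ω | X ω = b} ∩ {ω | Y ω = d}) = μ {ω | X ω = b} * μ {ω | Y ω = d} := hpr
    rw [this, ENNReal.toReal_mul, sub_self]
  refine ⟨0, by norm_num, ?_, ?_⟩
  · rw [corr_self' hXm hYm hX hY, hz]
    simp
  · intro g _
    rw [corr_comp' hXm hYm hX hY g, hz]
    simp

lemma indep_of_ic {r : ℝ} (hXm : Measurable X) (hYm : Measurable Y)
    (hX : BiAtomic μ X a b) (hY : BiAtomic μ Y c d) (hsupp : ¬(a = c ∧ b = d))
    (hcorr : corr μ X Y = r)
    (hall : ∀ g : ℝ → ℝ, Admissible μ X Y g → corr μ (g ∘ X) (g ∘ Y) = r) :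
    IndepFun X Y μ := by
  have hpos : 0 < (b - a) * (d - c) := mul_pos (sub_pos.2 hX.1) (sub_pos.2 hY.1)
  have hfac : ((b - a) * (d - c)) / |(b - a) * (d - c)| = 1 := by
    rw [abs_of_pos hpos, div_self hpos.ne']
  have hself := corr_self' hXm hYm hX hY
  rw [hfac, one_mul] at hself
  obtain ⟨g, hgm, hgneg⟩ := exists_flip hX.1 hY.1 hsupp
  have h1 : g b - g a ≠ 0 := fun h0 => by rw [h0, zero_mul] at hgneg; exact lt_irrefl 0 hgneg
  have h2 : g d - g c ≠ 0 := fun h0 => by rw [h0, mul_zero] at hgneg; exact lt_irrefl 0 hgneg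
  have hadm : Admissible μ X Y g :=
    admissible_of hXm hYm hX hY hgm (Ne.symm (sub_ne_zero.1 h1)) (Ne.symm (sub_ne_zero.1 h2))
  have hfacneg : ((g b - g a) * (g d - g c)) / |(g b - g a) * (g d - g c)| = -1 := by
    rw [abs_of_neg hgneg, div_neg, div_self hgneg.ne]
  have hcomp := corr_comp' hXm hYm hX hY g
  rw [hfacneg] at hcomp
  have hgr := hall g hadm
  rw [hcomp] at hgr
  have hρr : ((μ ({ω | X ω = b} ∩ {ω | Y ω = d})).toReal
      - (μ {ω | X ω = b}).toReal * (μ {ω | Y ω = d}).toReal)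
      / Real.sqrt (((μ {ω | X ω = b}).toReal * (1 - (μ {ω | X ω = b}).toReal))
        * ((μ {ω | Y ω = d}).toReal * (1 - (μ {ω | Y ω = d}).toReal))) = r := by
    rw [← hself]; exact hcorr
  have hρ0 : ((μ ({ω | X ω = b} ∩ {ω | Y ω = d})).toReal
      - (μ {ω | X ω = b}).toReal * (μ {ω | Y ω = d}).toReal)
      / Real.sqrt (((μ {ω | X ω = b}).toReal * (1 - (μ {ω | X ω = b}).toReal))
        * ((μ {ω | Y ω = d}).toReal * (1 - (μ {ω | Y ω = d}).toReal))) = 0 := by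
    rw [hρr]
    linarith [hρr, hgr]
  have hDpos : (0:ℝ) < Real.sqrt (((μ {ω | X ω = b}).toReal * (1 - (μ {ω | X ω = b}).toReal))
      * ((μ {ω | Y ω = d}).toReal * (1 - (μ {ω | Y ω = d}).toReal))) :=
    Real.sqrt_pos.2 (mul_pos (mul_pos hX.p_pos (by linarith [hX.p_lt_one]))
      (mul_pos hY.p_pos (by linarith [hY.p_lt_one])))
  have hnum : (μ ({ω | X ω = b} ∩ {ω | Y ω = d})).toReal
      - (μ {ω | X ω = b}).toReal * (μ {ω | Y ω = d}).toReal = 0 := by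
    rcases div_eq_zero_iff.1 hρ0 with h | h
    · exact h
    · exact absurd h hDpos.ne'
  have hμeq : μ ({ω | X ω = b} ∩ {ω | Y ω = d}) = μ {ω | X ω = b} * μ {ω | Y ω = d} := by
    have hfin1 : μ ({ω | X ω = b} ∩ {ω | Y ω = d}) ≠ ⊤ := measure_ne_top _ _
    have hfin2 : μ {ω | X ω = b} * μ {ω | Y ω = d} ≠ ⊤ :=
      ENNReal.mul_ne_top (measure_ne_top _ _) (measure_ne_top _ _)
    rw [← ENNReal.toReal_eq_toReal_iff' hfin1 hfin2, ENNReal.toReal_mul]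
    linarith [hnum]
  exact indep_of_product hXm hYm hX hY hμeq

end Corr

/-- For bi-atomic `X` and `Y`, `(X,Y) ∈ IC` iff either `X` and `Y` have the
same two-point support, or `X` and `Y` are independent. -/
theorem biatomic_ic_iff
    (μ : Measure Ω) [IsProbabilityMeasure μ] (X Y : Ω → ℝ)
    (hXm : Measurable X) (hYm : Measurable Y)
    (a b c d : ℝ) (hX : BiAtomic μ X a b) (hY : BiAtomic μ Y c d) :
    (∃ r ∈ Set.Icc (-1 : ℝ) 1, IC μ X Y r) ↔
      ((∃ u v : ℝ, BiAtomic μ X u v ∧ BiAtomic μ Y u v) ∨ IndepFun X Y μ) := by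
  constructor
  · rintro ⟨r, _, hcorr, hall⟩
    by_cases hsupp : a = c ∧ b = d
    · refine Or.inl ⟨a, b, hX, ?_⟩
      rw [hsupp.1, hsupp.2]
      exact hY
    · exact Or.inr (indep_of_ic hXm hYm hX hY hsupp hcorr hall)
  · rintro (⟨u, v, hXu, hYu⟩ | hind)
    · exact ic_of_same_support hXm hYm u v hXu hYu
    · exact ic_of_indep hXm hYm hX hY hind
end

section
/- Let X and Y be real random variables with finite positive variance such that X and Y have different distributions and the support of Y contains strictly more than 2 points. Then (X,Y) ∈ IC if and only if (X,Y) ∈ IC_0. -/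
open MeasureTheory ProbabilityTheory

variable {Ω : Type*} [MeasurableSpace Ω]

/-- The support of (the distribution of) `Y`: points `x` with
`P(x - ε < Y ≤ x + ε) > 0` for all `ε > 0`. -/
def distSupport (μ : Measure Ω) (Y : Ω → ℝ) : Set ℝ :=
  {x : ℝ | ∀ ε > (0 : ℝ), 0 < μ {ω | x - ε < Y ω ∧ Y ω ≤ x + ε}}

/-!
Suppose `(X, Y) ∈ IC_r` with `r ≠ 0`. For disjoint `A`, `B` and `g = 1_A + t • 1_B`, the
variances of `g(X)`, `g(Y)` and their covariance are quadratic polynomials `a`, `b`, `c` in `t`,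
and invariance gives `c² = r² a b`. If `Y` charges `A`, `B` and the rest of the line, `b` has no
real root, hence is irreducible, so `b ∣ c` and `a` is a multiple of `b`; comparing coefficients
forces `P(X ∈ A) = P(Y ∈ A)` and `P(X ∈ B) = P(Y ∈ B)`. Small neighbourhoods of three support
points of `Y` provide three such sets. Because `Var X > 0`, the half-line `{x ≤ E X}` splits `X`,
which rules out `X` being null on two of them. Finally every measurable set cuts into pieces, each
avoiding two of the neighbourhoods, so `X` and `Y` have the same law.
-/

open Polynomial

theorem Polynomial.exists_eq_C_mul_of_sq_eq_C_mul_mul {K : Type*} [Field K] {a b c : K[X]} {r : K}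
    (hr : r ≠ 0) (hb : Irreducible b) (hc : c.natDegree ≤ b.natDegree)
    (h : c ^ 2 = C (r ^ 2) * a * b) : ∃ l, a = C l * b := by
  obtain ⟨d, rfl⟩ : b ∣ c := hb.prime.dvd_of_dvd_pow (n := 2) ⟨C (r ^ 2) * a, by rw [h]; ring⟩
  have hd : d.natDegree = 0 := by
    rcases eq_or_ne d 0 with rfl | hd
    · simp
    · rw [natDegree_mul hb.ne_zero hd] at hc; omega
  rw [eq_C_of_natDegree_eq_zero hd] at h
  have hcancel : C (r ^ 2) * a = C (d.coeff 0 ^ 2) * b :=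
    mul_left_cancel₀ hb.ne_zero (by simp only [map_pow] at h ⊢; linear_combination -h)
  refine ⟨d.coeff 0 ^ 2 / r ^ 2, ?_⟩
  rw [div_eq_inv_mul, C_mul, mul_assoc, ← hcancel, ← mul_assoc, ← C_mul,
    inv_mul_cancel₀ (pow_ne_zero 2 hr), C_1, one_mul]

/-- `Var(1_A + t • 1_B)` as a polynomial in `t`, for disjoint events `A`, `B` of probabilities
`p`, `q`. -/
noncomputable def massVarPoly (p q : ℝ) : ℝ[X] :=
  C (q * (1 - q)) * X ^ 2 + C (-(2 * p * q)) * X + C (p * (1 - p))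

lemma eval_massVarPoly (p q t : ℝ) :
    (massVarPoly p q).eval t = p * (1 - p) - 2 * p * q * t + q * (1 - q) * t ^ 2 := by
  simp only [massVarPoly, eval_add, eval_mul, eval_C, eval_pow, eval_X]
  ring

lemma eval_massVarPoly_pos {p q : ℝ} (hp : 0 < p) (hq : 0 < q) (hpq : p + q < 1) (t : ℝ) :
    0 < (massVarPoly p q).eval t := by
  rw [eval_massVarPoly]
  nlinarith [sq_nonneg (p - (1 - q) * t), mul_pos (mul_pos hp hq) (sub_pos.2 hpq), sq_nonneg t]

lemma irreducible_massVarPoly {p q : ℝ} (hp : 0 < p) (hq : 0 < q) (hpq : p + q < 1) :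
    Irreducible (massVarPoly p q) := by
  refine irreducible_of_degree_le_three_of_not_isRoot ?_ fun t ht =>
    (eval_massVarPoly_pos hp hq hpq t).ne' ht
  rw [massVarPoly, natDegree_quadratic (by nlinarith)]
  decide

lemma eq_of_massVarPoly_eq_C_mul {p q p' q' l : ℝ} (hp : 0 < p) (hp1 : p < 1)
    (hp' : 0 < p') (hq' : 0 < q') (hpq' : p' + q' < 1)
    (h : massVarPoly p q = C l * massVarPoly p' q') : p = p' ∧ q = q' := by
  have h0 := congrArg (coeff · 0) h
  have h1 := congrArg (coeff · 1) h
  have h2 := congrArg (coeff · 2) h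
  simp only [massVarPoly, coeff_add, coeff_C_mul, coeff_X_pow, coeff_X, coeff_C] at h0 h1 h2
  norm_num at h0 h1 h2
  -- With `s = 1 - p - q`, the coefficients give `(p, q) s = l (p', q') s'` and `p q = l p' q'`,
  -- so `(p, q)` is proportional to `(p', q')`, and the ratio must be `1`.
  have hl : l ≠ 0 := by rintro rfl; nlinarith
  have hs : 1 - p' - q' ≠ 0 := by linarith
  have hA : p * (1 - p - q) = l * p' * (1 - p' - q') := by linear_combination h0 - h1 / 2
  have hB : q * (1 - p - q) = l * q' * (1 - p' - q') := by linear_combination h2 - h1 / 2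
  have hS : 1 - p - q ≠ 0 := fun hS0 => by
    rw [hS0, mul_zero] at hA
    exact mul_ne_zero (mul_ne_zero hl hp'.ne') hs hA.symm
  have hcross : p * q' = q * p' :=
    mul_left_cancel₀ hS (by linear_combination q' * hA - p' * hB)
  have hq : q ≠ 0 := by rintro rfl; nlinarith
  have hsq : p ^ 2 = l * p' ^ 2 :=
    mul_right_cancel₀ hq (by linear_combination p * h1 / 2 + l * p' * hcross)
  have hratio : p' * (1 - p - q) = p * (1 - p' - q') :=
    mul_left_cancel₀ (mul_ne_zero hl hp'.ne') (by linear_combination p * hA - (1 - p - q) * hsq)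
  have hpp : p = p' := by linear_combination -hratio + hcross
  subst hpp
  exact ⟨rfl, mul_left_cancel₀ hp.ne' (by linear_combination -hcross)⟩

lemma corr_comm (μ : Measure Ω) (X Y : Ω → ℝ) : corr μ X Y = corr μ Y X := by
  simp only [corr, cov, mul_comm (variance X μ)]
  congr 1
  exact integral_congr_ae (.of_forall fun _ => mul_comm _ _)

section Correlation

variable {μ : Measure Ω} {X Y : Ω → ℝ} {g : ℝ → ℝ} {r : ℝ}

lemma Admissible.symm (h : Admissible μ X Y g) : Admissible μ Y X g :=
  let ⟨hg, hgX, hgY, hvX, hvY⟩ := h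
  ⟨hg, hgY, hgX, hvY, hvX⟩

lemma IC.symm (h : IC μ X Y r) : IC μ Y X r :=
  ⟨corr_comm μ Y X ▸ h.1, fun g hg => corr_comm μ (g ∘ Y) (g ∘ X) ▸ h.2 g hg.symm⟩

lemma IC.covariance_sq_eq (h : IC μ X Y r) (hg : Admissible μ X Y g) :
    cov[g ∘ X, g ∘ Y; μ] ^ 2 = r ^ 2 * (Var[g ∘ X; μ] * Var[g ∘ Y; μ]) := by
  have hpos : 0 < Var[g ∘ X; μ] * Var[g ∘ Y; μ] := mul_pos hg.2.2.2.1 hg.2.2.2.2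
  have hcorr : cov[g ∘ X, g ∘ Y; μ] / √(Var[g ∘ X; μ] * Var[g ∘ Y; μ]) = r := h.2 g hg
  rw [div_eq_iff (Real.sqrt_pos.2 hpos).ne'] at hcorr
  rw [hcorr, mul_pow, Real.sq_sqrt hpos.le]

end Correlation

section Covariance

variable {μ : Measure Ω} {U₁ U₂ V₁ V₂ : Ω → ℝ}

lemma memLp_indicator_one_s9 [IsFiniteMeasure μ] {E : Set Ω} (hE : MeasurableSet E) :
    MemLp (E.indicator (1 : Ω → ℝ)) 2 μ :=
  memLp_indicator_const 2 hE 1 (.inr (measure_ne_top μ E))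

lemma covariance_indicator_one_s9 [IsProbabilityMeasure μ] {S T : Set Ω} (hS : MeasurableSet S)
    (hT : MeasurableSet T) :
    cov[S.indicator 1, T.indicator 1; μ] = μ.real (S ∩ T) - μ.real S * μ.real T := by
  rw [covariance_eq_sub (memLp_indicator_one_s9 hS) (memLp_indicator_one_s9 hT),
    ← Set.inter_indicator_one, integral_indicator_one (hS.inter hT), integral_indicator_one hS,
    integral_indicator_one hT]

lemma covariance_add_smul_add_smul [IsFiniteMeasure μ] (hU₁ : MemLp U₁ 2 μ) (hU₂ : MemLp U₂ 2 μ)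
    (hV₁ : MemLp V₁ 2 μ) (hV₂ : MemLp V₂ 2 μ) (t : ℝ) :
    cov[U₁ + t • U₂, V₁ + t • V₂; μ] =
      cov[U₁, V₁; μ] + t * (cov[U₁, V₂; μ] + cov[U₂, V₁; μ]) + t ^ 2 * cov[U₂, V₂; μ] := by
  rw [covariance_add_left hU₁ (hU₂.const_smul t) (hV₁.add (hV₂.const_smul t)),
    covariance_add_right hU₁ hV₁ (hV₂.const_smul t),
    covariance_add_right (hU₂.const_smul t) hV₁ (hV₂.const_smul t),
    covariance_smul_left, covariance_smul_left, covariance_smul_right, covariance_smul_right]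
  ring

end Covariance

noncomputable def twoStep (A B : Set ℝ) (t : ℝ) : ℝ → ℝ := A.indicator 1 + t • B.indicator 1

lemma twoStep_comp {α : Type*} {A B : Set ℝ} (Z : α → ℝ) (t : ℝ) :
    twoStep A B t ∘ Z = (Z ⁻¹' A).indicator 1 + t • (Z ⁻¹' B).indicator 1 :=
  rfl

section TwoStep

variable {μ : Measure Ω} [IsProbabilityMeasure μ] {X Y Z : Ω → ℝ} {A B : Set ℝ}

lemma measurable_twoStep (hA : MeasurableSet A) (hB : MeasurableSet B) (t : ℝ) :
    Measurable (twoStep A B t) :=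
  (measurable_const.indicator hA).add ((measurable_const.indicator hB).const_smul t)

lemma memLp_twoStep_comp (hZ : Measurable Z) (hA : MeasurableSet A) (hB : MeasurableSet B)
    (t : ℝ) : MemLp (twoStep A B t ∘ Z) 2 μ := by
  rw [twoStep_comp]
  exact (memLp_indicator_one_s9 (hZ hA)).add ((memLp_indicator_one_s9 (hZ hB)).const_smul t)

lemma variance_twoStep_comp (hZ : Measurable Z) (hA : MeasurableSet A) (hB : MeasurableSet B)
    (hAB : Disjoint A B) (t : ℝ) :
    Var[twoStep A B t ∘ Z; μ] = (massVarPoly ((μ.map Z).real A) ((μ.map Z).real B)).eval t := by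
  rw [← covariance_self (memLp_twoStep_comp hZ hA hB t).aemeasurable, twoStep_comp,
    covariance_add_smul_add_smul (memLp_indicator_one_s9 (hZ hA)) (memLp_indicator_one_s9 (hZ hB))
      (memLp_indicator_one_s9 (hZ hA)) (memLp_indicator_one_s9 (hZ hB)),
    covariance_indicator_one_s9 (hZ hA) (hZ hA), covariance_indicator_one_s9 (hZ hA) (hZ hB),
    covariance_indicator_one_s9 (hZ hB) (hZ hA), covariance_indicator_one_s9 (hZ hB) (hZ hB),
    Set.inter_self, Set.inter_self, (hAB.preimage Z).inter_eq, (hAB.symm.preimage Z).inter_eq,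
    eval_massVarPoly, map_measureReal_apply hZ hA, map_measureReal_apply hZ hB]
  simp only [measureReal_empty]
  ring

lemma exists_eval_eq_covariance_twoStep_comp (hX : Measurable X) (hY : Measurable Y)
    (hA : MeasurableSet A) (hB : MeasurableSet B) :
    ∃ c : Polynomial ℝ, c.natDegree ≤ 2 ∧
      ∀ t, c.eval t = cov[twoStep A B t ∘ X, twoStep A B t ∘ Y; μ] := by
  set U₁ := (X ⁻¹' A).indicator (1 : Ω → ℝ)
  set U₂ := (X ⁻¹' B).indicator (1 : Ω → ℝ)
  set V₁ := (Y ⁻¹' A).indicator (1 : Ω → ℝ)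
  set V₂ := (Y ⁻¹' B).indicator (1 : Ω → ℝ)
  refine ⟨C cov[U₂, V₂; μ] * Polynomial.X ^ 2 + C (cov[U₁, V₂; μ] + cov[U₂, V₁; μ]) * Polynomial.X
      + C cov[U₁, V₁; μ], natDegree_quadratic_le, fun t => ?_⟩
  rw [twoStep_comp, twoStep_comp, covariance_add_smul_add_smul (memLp_indicator_one_s9 (hX hA))
    (memLp_indicator_one_s9 (hX hB)) (memLp_indicator_one_s9 (hY hA)) (memLp_indicator_one_s9 (hY hB))]
  simp only [eval_add, eval_mul, eval_C, eval_pow, eval_X]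
  ring

end TwoStep

section Pair

variable {μ : Measure Ω} [IsProbabilityMeasure μ] {X Y : Ω → ℝ} {r : ℝ} {A B : Set ℝ}

theorem IC.map_real_eq_of_disjoint (h : IC μ X Y r) (hr : r ≠ 0) (hX : Measurable X)
    (hY : Measurable Y) (hA : MeasurableSet A) (hB : MeasurableSet B) (hAB : Disjoint A B)
    (hpA : 0 < (μ.map X).real A) (hpA1 : (μ.map X).real A < 1)
    (hqA : 0 < (μ.map Y).real A) (hqB : 0 < (μ.map Y).real B)
    (hqAB : (μ.map Y).real A + (μ.map Y).real B < 1) :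
    (μ.map X).real A = (μ.map Y).real A ∧ (μ.map X).real B = (μ.map Y).real B := by
  set a := massVarPoly ((μ.map X).real A) ((μ.map X).real B)
  set b := massVarPoly ((μ.map Y).real A) ((μ.map Y).real B)
  obtain ⟨c, hc, hc_eval⟩ := exists_eval_eq_covariance_twoStep_comp (μ := μ) hX hY hA hB
  have ha : a ≠ 0 := fun ha0 => by
    have := congrArg (eval 0) ha0
    rw [eval_massVarPoly, eval_zero] at this
    nlinarith
  -- `twoStep A B t` is admissible except at the finitely many roots of `a`.
  have key : c ^ 2 = C (r ^ 2) * a * b := by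
    refine eq_of_infinite_eval_eq _ _
      ((finite_setOfPred_isRoot ha).infinite_compl.mono fun t ht => ?_)
    have hvX := variance_twoStep_comp (μ := μ) hX hA hB hAB t
    have hvY := variance_twoStep_comp (μ := μ) hY hA hB hAB t
    have hadm : Admissible μ X Y (twoStep A B t) :=
      ⟨measurable_twoStep hA hB t, memLp_twoStep_comp hX hA hB t, memLp_twoStep_comp hY hA hB t,
        hvX ▸ (hvX ▸ variance_nonneg _ _).lt_of_ne' ht, hvY ▸ eval_massVarPoly_pos hqA hqB hqAB t⟩
    simpa [hc_eval, hvX, hvY, mul_assoc] using h.covariance_sq_eq hadm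
  have hb := irreducible_massVarPoly hqA hqB hqAB
  obtain ⟨l, hl⟩ := exists_eq_C_mul_of_sq_eq_C_mul_mul hr hb
    (hc.trans (natDegree_quadratic (by nlinarith)).ge) key
  exact eq_of_massVarPoly_eq_C_mul hpA hpA1 hqA hqB hqAB hl

end Pair

section Cut

variable {μ : Measure Ω} [IsProbabilityMeasure μ] {X : Ω → ℝ}

lemma exists_map_real_mem_Ioo (hXm : Measurable X) (hX : Integrable X μ) (hv : 0 < Var[X; μ]) :
    ∃ C : Set ℝ, MeasurableSet C ∧ 0 < (μ.map X).real C ∧ (μ.map X).real C < 1 := by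
  set m := ∫ ω, X ω ∂μ
  have hconst (hle : (fun _ => m) ≤ᵐ[μ] X ∨ X ≤ᵐ[μ] fun _ => m) : False := by
    have hae : X =ᵐ[μ] fun _ => m := by
      rcases hle with hle | hle
      · exact ((integral_eq_iff_of_ae_le (integrable_const _) hX hle).1 (by simp [m])).symm
      · exact (integral_eq_iff_of_ae_le hX (integrable_const _) hle).1 (by simp [m])
    exact hv.ne' (by simp [variance, (evariance_eq_zero_iff hXm.aemeasurable).2 hae])
  have hS : MeasurableSet (X ⁻¹' Set.Iic m) := hXm measurableSet_Iic
  refine ⟨Set.Iic m, measurableSet_Iic, ?_, ?_⟩ <;>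
    rw [map_measureReal_apply hXm measurableSet_Iic] <;> by_contra hS'
  · have h0 : μ (X ⁻¹' Set.Iic m) = 0 :=
      (measureReal_eq_zero_iff (measure_ne_top μ _)).1
        (le_antisymm (not_lt.1 hS') measureReal_nonneg)
    exact hconst (.inl ((measure_eq_zero_iff_ae_notMem.1 h0).mono fun ω hω => (not_le.1 hω).le))
  · have h0 : μ (X ⁻¹' Set.Iic m)ᶜ = 0 := by
      rw [← measureReal_eq_zero_iff, probReal_compl_eq_one_sub hS]
      linarith [measureReal_le_one (μ := μ) (s := X ⁻¹' Set.Iic m)]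
    exact hconst (.inr ((measure_eq_zero_iff_ae_notMem.1 h0).mono fun ω hω => not_not.1 hω))

end Cut

lemma measureReal_add_add_le_one {α : Type*} [MeasurableSpace α] {ν : Measure α}
    [IsZeroOrProbabilityMeasure ν] {A B E : Set α} (hB : MeasurableSet B) (hE : MeasurableSet E)
    (hAB : Disjoint A B) (hAE : Disjoint A E) (hBE : Disjoint B E) :
    ν.real A + ν.real B + ν.real E ≤ 1 := by
  rw [← measureReal_union hAB hB, ← measureReal_union (Set.disjoint_union_left.2 ⟨hAE, hBE⟩) hE]
  exact measureReal_le_one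

section Masses

variable {μ : Measure Ω} [IsProbabilityMeasure μ] {X Y : Ω → ℝ} {r : ℝ} {A B E : Set ℝ}

theorem IC.not_map_real_eq_zero_and_eq_zero (h : IC μ X Y r) (hr : r ≠ 0) (hX : Measurable X)
    (hY : Measurable Y) (hXint : Integrable X μ) (hv : 0 < Var[X; μ]) (hA : MeasurableSet A)
    (hB : MeasurableSet B) (hAB : Disjoint A B) (hqA : 0 < (μ.map Y).real A)
    (hqB : 0 < (μ.map Y).real B) (hqAB : (μ.map Y).real A + (μ.map Y).real B < 1) :
    ¬ ((μ.map X).real A = 0 ∧ (μ.map X).real B = 0) := by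
  rintro ⟨hpA, hpB⟩
  have := Measure.isProbabilityMeasure_map (μ := μ) hX.aemeasurable
  have := Measure.isProbabilityMeasure_map (μ := μ) hY.aemeasurable
  obtain ⟨C, hC, hC0, hC1⟩ := exists_map_real_mem_Ioo hX hXint hv
  have hU : MeasurableSet (A ∪ B) := hA.union hB
  -- Otherwise the pair lemma for `(D, A)` would give `P(X ∈ A) = P(Y ∈ A) > 0`.
  have hnull (D : Set ℝ) (hD : MeasurableSet D) (hDA : Disjoint D A) (hDB : Disjoint D B)
      (hD0 : 0 < (μ.map X).real D) (hD1 : (μ.map X).real D < 1) : (μ.map Y).real D = 0 := by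
    refine (measureReal_nonneg.lt_or_eq.resolve_left fun hqD => ?_).symm
    have hsum := measureReal_add_add_le_one (ν := μ.map Y) hA hB hDA hDB hAB
    have := (h.map_real_eq_of_disjoint hr hX hY hD hA hDA hD0 hD1 hqD hqA (by linarith)).2
    linarith
  have hpC : (μ.map X).real (C \ (A ∪ B)) = (μ.map X).real C :=
    measureReal_sdiff_null (measureReal_union_null hpA hpB)
  have hpCc : (μ.map X).real (Cᶜ \ (A ∪ B)) = 1 - (μ.map X).real C := by
    rw [measureReal_sdiff_null (measureReal_union_null hpA hpB), probReal_compl_eq_one_sub hC]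
  have hsplit : (μ.map Y).real (C \ (A ∪ B)) + (μ.map Y).real (Cᶜ \ (A ∪ B)) =
      1 - ((μ.map Y).real A + (μ.map Y).real B) := by
    rw [← measureReal_union hAB hB, ← probReal_compl_eq_one_sub hU, ← measureReal_union
      (disjoint_compl_right.mono Set.sdiff_subset Set.sdiff_subset) (hC.compl.diff hU)]
    congr 1
    ext x
    simp only [Set.mem_union, Set.mem_sdiff, Set.mem_compl_iff]
    tauto
  have h₁ := hnull _ (hC.diff hU) (Set.disjoint_sdiff_left.mono_right Set.subset_union_left)
    (Set.disjoint_sdiff_left.mono_right Set.subset_union_right) (hpC ▸ hC0) (hpC ▸ hC1)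
  have h₂ := hnull _ (hC.compl.diff hU) (Set.disjoint_sdiff_left.mono_right Set.subset_union_left)
    (Set.disjoint_sdiff_left.mono_right Set.subset_union_right) (by linarith) (by linarith)
  linarith

theorem IC.map_real_eq_of_disjoint_of_eq (h : IC μ X Y r) (hr : r ≠ 0) (hX : Measurable X)
    (hY : Measurable Y) (hA : MeasurableSet A) (hB : MeasurableSet B) (hE : MeasurableSet E)
    (hAB : Disjoint A B) (hEA : Disjoint E A) (hEB : Disjoint E B)
    (hqA : 0 < (μ.map Y).real A) (hqB : 0 < (μ.map Y).real B)
    (hpqA : (μ.map X).real A = (μ.map Y).real A) (hpqB : (μ.map X).real B = (μ.map Y).real B) :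
    (μ.map X).real E = (μ.map Y).real E := by
  have hpsum := measureReal_add_add_le_one (ν := μ.map X) hA hB hEA hEB hAB
  have hqsum := measureReal_add_add_le_one (ν := μ.map Y) hA hB hEA hEB hAB
  rcases measureReal_nonneg.lt_or_eq with hqE | hqE
  · exact (h.map_real_eq_of_disjoint hr hX hY hA hE hEA.symm (by linarith) (by linarith) hqA hqE
      (by linarith)).2
  rcases measureReal_nonneg.lt_or_eq with hpE | hpE
  · exact (h.symm.map_real_eq_of_disjoint hr hY hX hA hE hEA.symm hqA (by linarith) (by linarith)
      hpE (by linarith)).2.symm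
  · rw [← hqE, ← hpE]

theorem IC.map_real_eq_of_pos_of_pos (h : IC μ X Y r) (hr : r ≠ 0) (hX : Measurable X)
    (hY : Measurable Y) (hA : MeasurableSet A) (hB : MeasurableSet B) (hE : MeasurableSet E)
    (hAB : Disjoint A B) (hAE : Disjoint A E) (hBE : Disjoint B E)
    (hqA : 0 < (μ.map Y).real A) (hqB : 0 < (μ.map Y).real B) (hqE : 0 < (μ.map Y).real E)
    (hpA : 0 < (μ.map X).real A) (hpB : 0 < (μ.map X).real B) :
    (μ.map X).real A = (μ.map Y).real A ∧ (μ.map X).real B = (μ.map Y).real B ∧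
      (μ.map X).real E = (μ.map Y).real E := by
  have hpsum := measureReal_add_add_le_one (ν := μ.map X) hB hE hAB hAE hBE
  have hqsum := measureReal_add_add_le_one (ν := μ.map Y) hB hE hAB hAE hBE
  have hpE : 0 ≤ (μ.map X).real E := measureReal_nonneg
  obtain ⟨hpqA, hpqB⟩ := h.map_real_eq_of_disjoint hr hX hY hA hB hAB hpA (by linarith) hqA hqB
    (by linarith)
  exact ⟨hpqA, hpqB, h.map_real_eq_of_disjoint_of_eq hr hX hY hA hB hE hAB hAE.symm hBE.symm hqA hqB
    hpqA hpqB⟩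

theorem IC.map_real_eq_of_three (h : IC μ X Y r) (hr : r ≠ 0) (hX : Measurable X)
    (hY : Measurable Y) (hXint : Integrable X μ) (hv : 0 < Var[X; μ]) {A₁ A₂ A₃ : Set ℝ}
    (h₁ : MeasurableSet A₁) (h₂ : MeasurableSet A₂) (h₃ : MeasurableSet A₃)
    (h₁₂ : Disjoint A₁ A₂) (h₁₃ : Disjoint A₁ A₃) (h₂₃ : Disjoint A₂ A₃)
    (hq₁ : 0 < (μ.map Y).real A₁) (hq₂ : 0 < (μ.map Y).real A₂) (hq₃ : 0 < (μ.map Y).real A₃) :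
    (μ.map X).real A₁ = (μ.map Y).real A₁ ∧ (μ.map X).real A₂ = (μ.map Y).real A₂ ∧
      (μ.map X).real A₃ = (μ.map Y).real A₃ := by
  have hqsum := measureReal_add_add_le_one (ν := μ.map Y) h₂ h₃ h₁₂ h₁₃ h₂₃
  rcases measureReal_nonneg.lt_or_eq with hp₁ | hp₁
  · rcases measureReal_nonneg.lt_or_eq with hp₂ | hp₂
    · exact h.map_real_eq_of_pos_of_pos hr hX hY h₁ h₂ h₃ h₁₂ h₁₃ h₂₃ hq₁ hq₂ hq₃ hp₁ hp₂
    · have hp₃ := measureReal_nonneg.lt_of_ne fun hp₃ =>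
        h.not_map_real_eq_zero_and_eq_zero hr hX hY hXint hv h₂ h₃ h₂₃ hq₂ hq₃ (by linarith)
          ⟨hp₂.symm, hp₃.symm⟩
      obtain ⟨e₁, e₃, e₂⟩ :=
        h.map_real_eq_of_pos_of_pos hr hX hY h₁ h₃ h₂ h₁₃ h₁₂ h₂₃.symm hq₁ hq₃ hq₂ hp₁ hp₃
      exact ⟨e₁, e₂, e₃⟩
  · have hp₂ := measureReal_nonneg.lt_of_ne fun hp₂ =>
      h.not_map_real_eq_zero_and_eq_zero hr hX hY hXint hv h₁ h₂ h₁₂ hq₁ hq₂ (by linarith)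
        ⟨hp₁.symm, hp₂.symm⟩
    have hp₃ := measureReal_nonneg.lt_of_ne fun hp₃ =>
      h.not_map_real_eq_zero_and_eq_zero hr hX hY hXint hv h₁ h₃ h₁₃ hq₁ hq₃ (by linarith)
        ⟨hp₁.symm, hp₃.symm⟩
    obtain ⟨e₂, e₃, e₁⟩ :=
      h.map_real_eq_of_pos_of_pos hr hX hY h₂ h₃ h₁ h₂₃ h₁₂.symm h₁₃.symm hq₂ hq₃ hq₁ hp₂ hp₃
    exact ⟨e₁, e₂, e₃⟩

theorem IC.map_eq_of_three (h : IC μ X Y r) (hr : r ≠ 0) (hX : Measurable X)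
    (hY : Measurable Y) (hXint : Integrable X μ) (hv : 0 < Var[X; μ]) {A₁ A₂ A₃ : Set ℝ}
    (h₁ : MeasurableSet A₁) (h₂ : MeasurableSet A₂) (h₃ : MeasurableSet A₃)
    (h₁₂ : Disjoint A₁ A₂) (h₁₃ : Disjoint A₁ A₃) (h₂₃ : Disjoint A₂ A₃)
    (hq₁ : 0 < (μ.map Y).real A₁) (hq₂ : 0 < (μ.map Y).real A₂) (hq₃ : 0 < (μ.map Y).real A₃) :
    μ.map X = μ.map Y := by
  obtain ⟨e₁, e₂, e₃⟩ :=
    h.map_real_eq_of_three hr hX hY hXint hv h₁ h₂ h₃ h₁₂ h₁₃ h₂₃ hq₁ hq₂ hq₃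
  refine Measure.ext fun S hS => (measureReal_eq_measureReal_iff).1 ?_
  -- Each piece of `S = (S ∩ A₁) ∪ ((S \ A₁) ∩ A₂) ∪ (S \ A₁ \ A₂)` avoids two of the `Aᵢ`.
  rw [← measureReal_inter_add_sdiff h₁, ← measureReal_inter_add_sdiff (s := S \ A₁) h₂,
    ← measureReal_inter_add_sdiff (μ := μ.map Y) h₁,
    ← measureReal_inter_add_sdiff (μ := μ.map Y) (s := S \ A₁) h₂,
    h.map_real_eq_of_disjoint_of_eq hr hX hY h₂ h₃ (hS.inter h₁) h₂₃
      (h₁₂.mono_left Set.inter_subset_right) (h₁₃.mono_left Set.inter_subset_right) hq₂ hq₃ e₂ e₃,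
    h.map_real_eq_of_disjoint_of_eq hr hX hY h₁ h₃ ((hS.diff h₁).inter h₂) h₁₃
      (Set.disjoint_sdiff_left.mono_left Set.inter_subset_left)
      (h₂₃.mono_left Set.inter_subset_right) hq₁ hq₃ e₁ e₃,
    h.map_real_eq_of_disjoint_of_eq hr hX hY h₁ h₂ ((hS.diff h₁).diff h₂) h₁₂
      (Set.disjoint_sdiff_left.mono_left Set.sdiff_subset) Set.disjoint_sdiff_left hq₁ hq₂ e₁ e₂]

end Masses

lemma Set.Ioc_disjoint_Ioc_of_two_mul_le_abs {a b ε : ℝ} (h : 2 * ε ≤ |a - b|) :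
    Disjoint (Set.Ioc (a - ε) (a + ε)) (Set.Ioc (b - ε) (b + ε)) := by
  rw [Set.Ioc_disjoint_Ioc, min_le_iff, le_max_iff, le_max_iff]
  rcases abs_cases (a - b) with ⟨hab, -⟩ | ⟨hab, -⟩ <;> rw [hab] at h
  · exact .inr (.inl (by linarith))
  · exact .inl (.inr (by linarith))

section Support

variable {μ : Measure Ω} [IsProbabilityMeasure μ] {X Y : Ω → ℝ} {r : ℝ}

lemma map_real_Ioc_pos_of_mem_distSupport (hY : Measurable Y) {a ε : ℝ}
    (ha : a ∈ distSupport μ Y) (hε : 0 < ε) :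
    0 < (μ.map Y).real (Set.Ioc (a - ε) (a + ε)) := by
  rw [map_measureReal_apply hY measurableSet_Ioc]
  exact ENNReal.toReal_pos (ha ε hε).ne' (measure_ne_top μ _)

theorem IC.map_eq_of_mem_distSupport (h : IC μ X Y r) (hr : r ≠ 0) (hX : Measurable X)
    (hY : Measurable Y) (hXint : Integrable X μ) (hv : 0 < Var[X; μ]) {a b c : ℝ}
    (ha : a ∈ distSupport μ Y) (hb : b ∈ distSupport μ Y) (hc : c ∈ distSupport μ Y)
    (hab : a ≠ b) (hac : a ≠ c) (hbc : b ≠ c) :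
    μ.map X = μ.map Y := by
  obtain ⟨m, hm, hmab, hmac, hmbc⟩ : ∃ m, 0 < m ∧ m ≤ |a - b| ∧ m ≤ |a - c| ∧ m ≤ |b - c| :=
    ⟨min (min |a - b| |a - c|) |b - c|, by simp [sub_ne_zero, hab, hac, hbc],
      (min_le_left _ _).trans (min_le_left _ _), (min_le_left _ _).trans (min_le_right _ _),
      min_le_right _ _⟩
  have hε : 0 < m / 2 := half_pos hm
  have hεab : 2 * (m / 2) ≤ |a - b| := by linarith
  have hεac : 2 * (m / 2) ≤ |a - c| := by linarith
  have hεbc : 2 * (m / 2) ≤ |b - c| := by linarith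
  exact h.map_eq_of_three hr hX hY hXint hv measurableSet_Ioc measurableSet_Ioc measurableSet_Ioc
    (Set.Ioc_disjoint_Ioc_of_two_mul_le_abs hεab) (Set.Ioc_disjoint_Ioc_of_two_mul_le_abs hεac)
    (Set.Ioc_disjoint_Ioc_of_two_mul_le_abs hεbc) (map_real_Ioc_pos_of_mem_distSupport hY ha hε)
    (map_real_Ioc_pos_of_mem_distSupport hY hb hε) (map_real_Ioc_pos_of_mem_distSupport hY hc hε)

end Support

theorem ic_iff_ic_zero_of_diff_dist_general
    (μ : Measure Ω) [IsProbabilityMeasure μ] (X Y : Ω → ℝ)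
    (hXm : Measurable X) (hYm : Measurable Y)
    (hX2 : MemLp X 2 μ)
    (hvX : 0 < variance X μ)
    (hdiff : Measure.map X μ ≠ Measure.map Y μ)
    (hsupp : ∃ a b c : ℝ, a ∈ distSupport μ Y ∧ b ∈ distSupport μ Y ∧ c ∈ distSupport μ Y ∧
      a ≠ b ∧ a ≠ c ∧ b ≠ c) :
    (∃ r ∈ Set.Icc (-1 : ℝ) 1, IC μ X Y r) ↔ IC μ X Y 0 := by
  refine ⟨fun ⟨r, _, h⟩ => ?_, fun h => ⟨0, by norm_num, h⟩⟩
  obtain ⟨a, b, c, ha, hb, hc, hab, hac, hbc⟩ := hsupp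
  obtain rfl : r = 0 := by_contra fun hr => hdiff <|
    h.map_eq_of_mem_distSupport hr hXm hYm (hX2.integrable one_le_two) hvX ha hb hc hab hac hbc
  exact h

/-- If `X` and `Y` have different distributions and the support of `Y`
contains strictly more than two points, then `(X,Y) ∈ IC` iff `(X,Y) ∈ IC_0`. -/
theorem ic_iff_ic_zero_of_diff_dist
    (μ : Measure Ω) [IsProbabilityMeasure μ] (X Y : Ω → ℝ)
    (hXm : Measurable X) (hYm : Measurable Y)
    (hX2 : MemLp X 2 μ) (hY2 : MemLp Y 2 μ)
    (hvX : 0 < variance X μ) (hvY : 0 < variance Y μ)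
    (hdiff : Measure.map X μ ≠ Measure.map Y μ)
    (hsupp : ∃ a b c : ℝ, a ∈ distSupport μ Y ∧ b ∈ distSupport μ Y ∧ c ∈ distSupport μ Y ∧
      a ≠ b ∧ a ≠ c ∧ b ≠ c) :
    (∃ r ∈ Set.Icc (-1 : ℝ) 1, IC μ X Y r) ↔ IC μ X Y 0 :=
  ic_iff_ic_zero_of_diff_dist_general μ X Y hXm hYm hX2 hvX hdiff hsupp
end

section
/- Let X and Y be identically distributed random variables taking values x₁ < ⋯ < x_n with p_i = P(X = x_i) = P(Y = x_i) > 0 for each i ∈ [n]. Let P = (p_{ij}) with p_{ij} = P(X = x_i, Y = x_j), p = (p₁,…,p_n)ᵀ and D = diag(p). Then (X,Y) ∈ IC_r for some r ∈ [-1,1] if and only if (P + Pᵀ)/2 = r·D + (1−r)·p pᵀ. Furthermore, in this case r satisfies r̲_p ≤ r ≤ 1, where r̲_p = max( max_{j∈[n]} (−p_j/(1−p_j)), max_{i,j∈[n], i≠j} (1 − 1/(p_i p_j)) ). -/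
open MeasureTheory ProbabilityTheory Matrix

variable {Ω : Type*} [MeasurableSpace Ω]

/-! For a function `g`, the variance of `g(X)` and the covariance of `g(X)` and `g(Y)` are
quadratic forms in the vector `v = (g(x_i))_i`, namely `vᵀDv - (pᵀv)²` and `vᵀPv - (pᵀv)²`.
Hence `(X,Y) ∈ IC_r` says that the symmetric matrix `M = (P + Pᵀ)/2 - rD - (1-r)ppᵀ` satisfies
`vᵀMv = 0` for every non-constant `v`. For constant `v` this holds anyway, since the entries of
`p` and of `P` both sum to `1`, and a symmetric matrix with vanishing quadratic form is zero.
The bounds on `r` are the entrywise constraints `P_jj ≥ 0` and `P_ij ≤ 1` read off from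
`M = 0`. -/

section FiniteRange

variable {ι α : Type*} [Fintype ι] {μ : Measure Ω} {Z : Ω → α} {z : ι → α}

lemma comp_ae_eq_sum_indicator (hz : Function.Injective z) (hZ : ∀ᵐ ω ∂μ, Z ω ∈ Set.range z)
    (f : α → ℝ) :
    (fun ω => f (Z ω)) =ᵐ[μ] fun ω => ∑ i, (Z ⁻¹' {z i}).indicator (fun _ => f (z i)) ω := by
  filter_upwards [hZ] with ω ⟨i, hi⟩
  classical
  simp only [Set.indicator_apply, Set.mem_preimage, Set.mem_singleton_iff, ← hi, hz.eq_iff,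
    Finset.sum_ite_eq, Finset.mem_univ, if_true]

variable [MeasurableSpace α] [MeasurableSingletonClass α] [IsFiniteMeasure μ]

lemma memLp_comp_of_ae_mem_range (hZm : Measurable Z) (hz : Function.Injective z)
    (hZ : ∀ᵐ ω ∂μ, Z ω ∈ Set.range z) (f : α → ℝ) (q : ENNReal) :
    MemLp (f ∘ Z) q μ :=
  (memLp_finsetSum _ fun i _ => memLp_indicator_const q (hZm (measurableSet_singleton (z i)))
    (f (z i)) (Or.inr (measure_ne_top μ _))).ae_eq (comp_ae_eq_sum_indicator hz hZ f).symm

lemma integral_comp_eq_sum (hZm : Measurable Z) (hz : Function.Injective z)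
    (hZ : ∀ᵐ ω ∂μ, Z ω ∈ Set.range z) (f : α → ℝ) :
    ∫ ω, f (Z ω) ∂μ = ∑ i, f (z i) * μ.real (Z ⁻¹' {z i}) := by
  rw [integral_congr_ae (comp_ae_eq_sum_indicator hz hZ f), integral_finsetSum _ fun i _ =>
    (integrable_const _).indicator (hZm (measurableSet_singleton _))]
  simp [integral_indicator_const _ (hZm (measurableSet_singleton _)), mul_comm]

end FiniteRange

lemma exists_measurable_comp_eq {ι : Type*} [Fintype ι] {x : ι → ℝ} (hx : Function.Injective x)
    (v : ι → ℝ) : ∃ g : ℝ → ℝ, Measurable g ∧ g ∘ x = v := by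
  classical
  refine ⟨fun t => ∑ i, ({x i} : Set ℝ).indicator (fun _ => v i) t,
    Finset.measurable_sum _ fun i _ => measurable_const.indicator (measurableSet_singleton _),
    funext fun k => ?_⟩
  simp only [Function.comp_apply, Set.indicator_apply, Set.mem_singleton_iff, hx.eq_iff,
    Finset.sum_ite_eq, Finset.mem_univ, if_true]

section QuadraticForms

variable {ι : Type*} [Fintype ι] {p : ι → ℝ}

def covarianceForm (P : Matrix ι ι ℝ) (p v : ι → ℝ) : ℝ := v ⬝ᵥ P *ᵥ v - (v ⬝ᵥ p) ^ 2

lemma covarianceForm_const (hp1 : ∑ i, p i = 1) {P : Matrix ι ι ℝ} (hP1 : ∑ i, ∑ j, P i j = 1)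
    (c : ℝ) : covarianceForm P p (fun _ => c) = 0 := by
  simp only [covarianceForm, dotProduct, mulVec, ← Finset.mul_sum, ← Finset.sum_mul, hp1, hP1]
  ring

variable [DecidableEq ι]

def varianceForm (p v : ι → ℝ) : ℝ := v ⬝ᵥ diagonal p *ᵥ v - (v ⬝ᵥ p) ^ 2

lemma varianceForm_eq_sum_sq (hp : ∑ i, p i = 1) (v : ι → ℝ) :
    varianceForm p v = ∑ i, (v i - v ⬝ᵥ p) ^ 2 * p i := by
  have hexpand : ∑ i, (v i - v ⬝ᵥ p) ^ 2 * p i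
      = ∑ i, v i * (p i * v i) - 2 * (v ⬝ᵥ p) * ∑ i, v i * p i + (v ⬝ᵥ p) ^ 2 * ∑ i, p i := by
    simp only [Finset.mul_sum, ← Finset.sum_sub_distrib, ← Finset.sum_add_distrib]
    exact Finset.sum_congr rfl fun i _ => by ring
  rw [hexpand, hp, varianceForm]
  simp only [dotProduct, mulVec_diagonal]
  ring

lemma varianceForm_pos_iff (hp : ∀ i, 0 < p i) (hp1 : ∑ i, p i = 1) {v : ι → ℝ} :
    0 < varianceForm p v ↔ v ≠ fun _ => v ⬝ᵥ p := by
  rw [varianceForm_eq_sum_sq hp1, Finset.sum_pos_iff_of_nonneg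
    fun i _ => mul_nonneg (sq_nonneg _) (hp i).le, Function.ne_iff]
  simp only [Finset.mem_univ, true_and, mul_pos_iff_of_pos_right (hp _), sq_pos_iff,
    sub_ne_zero]

lemma varianceForm_const (hp1 : ∑ i, p i = 1) (c : ℝ) : varianceForm p (fun _ => c) = 0 := by
  simp only [varianceForm, dotProduct, mulVec_diagonal, ← Finset.mul_sum, ← Finset.sum_mul, hp1]
  ring

lemma covarianceForm_sub_mul_varianceForm (P : Matrix ι ι ℝ) (p v : ι → ℝ) (r : ℝ) :
    covarianceForm P p v - r * varianceForm p v =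
      v ⬝ᵥ ((2 : ℝ)⁻¹ • (P + Pᵀ) - (r • diagonal p + (1 - r) • vecMulVec p p)) *ᵥ v := by
  have hT : v ⬝ᵥ Pᵀ *ᵥ v = v ⬝ᵥ P *ᵥ v := by
    rw [mulVec_transpose, dotProduct_comm, dotProduct_mulVec]
  simp only [covarianceForm, varianceForm, sub_mulVec, add_mulVec, smul_mulVec,
    dotProduct_sub, dotProduct_add, dotProduct_smul, hT, vecMulVec_mulVec, smul_eq_mul]
  rw [op_smul_eq_mul, dotProduct_comm p v]
  ring

lemma Matrix.IsSymm.eq_zero_of_forall_dotProduct_mulVec_self {M : Matrix ι ι ℝ} (hM : M.IsSymm)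
    (h : ∀ v, v ⬝ᵥ M *ᵥ v = 0) : M = 0 := by
  have hdiag : ∀ i, M i i = 0 := fun i => by simpa using h (Pi.single i 1)
  ext i j
  have := h (Pi.single i 1 + Pi.single j 1)
  simp only [mulVec_add, mulVec_single, MulOpposite.op_one, one_smul, dotProduct_add,
    add_dotProduct, single_dotProduct, col_apply, hdiag, mul_zero, one_mul, zero_add,
    add_zero] at this
  rw [zero_apply]
  linarith [hM.apply i j]

lemma symmetrization_eq_iff (hp : ∀ i, 0 < p i) (hp1 : ∑ i, p i = 1) {P : Matrix ι ι ℝ}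
    (hP1 : ∑ i, ∑ j, P i j = 1) (r : ℝ) :
    (2 : ℝ)⁻¹ • (P + Pᵀ) = r • diagonal p + (1 - r) • vecMulVec p p ↔
      ∀ v, 0 < varianceForm p v → covarianceForm P p v = r * varianceForm p v := by
  rw [← sub_eq_zero]
  set M := (2 : ℝ)⁻¹ • (P + Pᵀ) - (r • diagonal p + (1 - r) • vecMulVec p p)
  have hform (v : ι → ℝ) : covarianceForm P p v - r * varianceForm p v = v ⬝ᵥ M *ᵥ v :=
    covarianceForm_sub_mul_varianceForm P p v r
  constructor
  · intro hM v _
    rw [← sub_eq_zero, hform, hM, zero_mulVec, dotProduct_zero]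
  · intro h
    have hMsymm : M.IsSymm := by
      simp only [IsSymm, M, transpose_sub, transpose_add, transpose_smul, transpose_transpose,
        diagonal_transpose, transpose_vecMulVec, add_comm Pᵀ]
    refine hMsymm.eq_zero_of_forall_dotProduct_mulVec_self fun v => ?_
    rw [← hform]
    by_cases hv : 0 < varianceForm p v
    · rw [h v hv, sub_self]
    · rw [varianceForm_pos_iff hp hp1, not_not] at hv
      rw [hv, covarianceForm_const hp1 hP1, varianceForm_const hp1, mul_zero, sub_zero]

end QuadraticForms

lemma lower_bounds_of_symmetrization_eq {ι : Type*} [DecidableEq ι] {P : Matrix ι ι ℝ}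
    {p : ι → ℝ} {r : ℝ}
    (hE : (2 : ℝ)⁻¹ • (P + Pᵀ) = r • diagonal p + (1 - r) • vecMulVec p p)
    (hP0 : ∀ i j, 0 ≤ P i j) (hP1 : ∀ i j, P i j ≤ 1) (hp : ∀ i, 0 < p i) (hp1 : ∀ i, p i < 1) :
    (∀ j, -(p j) / (1 - p j) ≤ r) ∧ (∀ i j, i ≠ j → 1 - 1 / (p i * p j) ≤ r) := by
  have hentry (i j : ι) :
      2⁻¹ * (P i j + P j i) = r * diagonal p i j + (1 - r) * (p i * p j) := by
    simpa [vecMulVec_apply] using congrFun (congrFun hE i) j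
  refine ⟨fun j => ?_, fun i j hij => ?_⟩
  · have hdiag : P j j = p j * (r * (1 - p j) + p j) := by
      have := hentry j j
      rw [diagonal_apply_eq] at this
      linear_combination this
    have : 0 ≤ r * (1 - p j) + p j :=
      (mul_nonneg_iff_of_pos_left (hp j)).1 (hdiag ▸ hP0 j j)
    rw [div_le_iff₀ (sub_pos.2 (hp1 j))]
    linarith
  · have hoff := hentry i j
    rw [diagonal_apply_ne _ hij, mul_zero, zero_add] at hoff
    have : 1 - r ≤ 1 / (p i * p j) :=
      (le_div_iff₀ (mul_pos (hp i) (hp j))).2 (by linarith [hP1 i j, hP1 j i])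
    linarith

section FiniteGrid

variable {ι : Type*} [Fintype ι]

noncomputable def atomProb (μ : Measure Ω) (X : Ω → ℝ) (x : ι → ℝ) : ι → ℝ :=
  fun i => μ.real {ω | X ω = x i}

noncomputable def jointProb (μ : Measure Ω) (X Y : Ω → ℝ) (x : ι → ℝ) : Matrix ι ι ℝ :=
  Matrix.of fun i j => μ.real {ω | X ω = x i ∧ Y ω = x j}

variable {μ : Measure Ω} [IsProbabilityMeasure μ] {X Y : Ω → ℝ} {x : ι → ℝ}

lemma integral_comp_prodMk_eq_sum (hXm : Measurable X) (hYm : Measurable Y)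
    (hx : Function.Injective x) (hX : ∀ᵐ ω ∂μ, X ω ∈ Set.range x)
    (hY : ∀ᵐ ω ∂μ, Y ω ∈ Set.range x) (f : ℝ → ℝ → ℝ) :
    ∫ ω, f (X ω) (Y ω) ∂μ = ∑ i, ∑ j, f (x i) (x j) * jointProb μ X Y x i j := by
  have hXY : ∀ᵐ ω ∂μ, (X ω, Y ω) ∈ Set.range (Prod.map x x) := by
    filter_upwards [hX, hY] with ω ⟨i, hi⟩ ⟨j, hj⟩
    exact ⟨(i, j), by simp [hi, hj]⟩
  have h := integral_comp_eq_sum (hXm.prodMk hYm) (hx.prodMap hx) hXY fun st => f st.1 st.2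
  simp only [Fintype.sum_prod_type, Prod.map_apply, Set.preimage, Set.mem_singleton_iff,
    Prod.mk.injEq] at h
  exact h

lemma sum_atomProb (hXm : Measurable X) (hx : Function.Injective x)
    (hX : ∀ᵐ ω ∂μ, X ω ∈ Set.range x) : ∑ i, atomProb μ X x i = 1 := by
  have h := integral_comp_eq_sum hXm hx hX fun _ => (1 : ℝ)
  simp only [integral_const, probReal_univ, smul_eq_mul, one_mul] at h
  exact h.symm

lemma sum_jointProb (hXm : Measurable X) (hYm : Measurable Y) (hx : Function.Injective x)
    (hX : ∀ᵐ ω ∂μ, X ω ∈ Set.range x) (hY : ∀ᵐ ω ∂μ, Y ω ∈ Set.range x) :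
    ∑ i, ∑ j, jointProb μ X Y x i j = 1 := by
  simpa using (integral_comp_prodMk_eq_sum hXm hYm hx hX hY fun _ _ => 1).symm

lemma variance_comp_eq [DecidableEq ι] (hXm : Measurable X) (hx : Function.Injective x)
    (hX : ∀ᵐ ω ∂μ, X ω ∈ Set.range x) (g : ℝ → ℝ) :
    variance (g ∘ X) μ = varianceForm (atomProb μ X x) (g ∘ x) := by
  rw [variance_eq_sub (memLp_comp_of_ae_mem_range hXm hx hX g 2), varianceForm]
  refine congr_arg₂ _ ((integral_comp_eq_sum hXm hx hX fun t => g t ^ 2).trans ?_)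
    (congr_arg (· ^ 2) (integral_comp_eq_sum hXm hx hX g))
  simp only [dotProduct, mulVec_diagonal, Function.comp_apply, atomProb, Set.preimage,
    Set.mem_singleton_iff]
  exact Finset.sum_congr rfl fun i _ => by ring

lemma cov_comp_eq (hXm : Measurable X) (hYm : Measurable Y) (hx : Function.Injective x)
    (hX : ∀ᵐ ω ∂μ, X ω ∈ Set.range x) (hY : ∀ᵐ ω ∂μ, Y ω ∈ Set.range x) (g h : ℝ → ℝ) :
    cov μ (g ∘ X) (h ∘ Y) = (g ∘ x) ⬝ᵥ jointProb μ X Y x *ᵥ (h ∘ x)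
      - ((g ∘ x) ⬝ᵥ atomProb μ X x) * ((h ∘ x) ⬝ᵥ atomProb μ Y x) := by
  change covariance (g ∘ X) (h ∘ Y) μ = _
  rw [covariance_eq_sub (memLp_comp_of_ae_mem_range hXm hx hX g 2)
    (memLp_comp_of_ae_mem_range hYm hx hY h 2)]
  refine congr_arg₂ _ ((integral_comp_prodMk_eq_sum hXm hYm hx hX hY fun s t => g s * h t).trans ?_)
    (congr_arg₂ _ (integral_comp_eq_sum hXm hx hX g) (integral_comp_eq_sum hYm hx hY h))
  simp only [dotProduct, mulVec, Function.comp_apply, Finset.mul_sum]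
  exact Finset.sum_congr rfl fun i _ => Finset.sum_congr rfl fun j _ => by ring

end FiniteGrid

section InvariantCorrelation

variable {ι : Type*} [Fintype ι] [DecidableEq ι] {μ : Measure Ω} [IsProbabilityMeasure μ]
  {X Y : Ω → ℝ} {x : ι → ℝ}

lemma corr_comp_eq (hXm : Measurable X) (hYm : Measurable Y) (hx : Function.Injective x)
    (hX : ∀ᵐ ω ∂μ, X ω ∈ Set.range x) (hY : ∀ᵐ ω ∂μ, Y ω ∈ Set.range x)
    (hYX : atomProb μ Y x = atomProb μ X x) (g : ℝ → ℝ) :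
    corr μ (g ∘ X) (g ∘ Y) = covarianceForm (jointProb μ X Y x) (atomProb μ X x) (g ∘ x)
      / varianceForm (atomProb μ X x) (g ∘ x) := by
  have hvar := variance_comp_eq hXm hx hX g
  rw [corr, hvar, variance_comp_eq hYm hx hY g, hYX,
    Real.sqrt_mul_self (hvar ▸ variance_nonneg _ _), cov_comp_eq hXm hYm hx hX hY, hYX,
    covarianceForm, sq]

lemma ic_iff_forall_covarianceForm [Nontrivial ι] (hXm : Measurable X) (hYm : Measurable Y)
    (hx : Function.Injective x) (hX : ∀ᵐ ω ∂μ, X ω ∈ Set.range x)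
    (hY : ∀ᵐ ω ∂μ, Y ω ∈ Set.range x) (hYX : atomProb μ Y x = atomProb μ X x)
    (hp : ∀ i, 0 < atomProb μ X x i) (r : ℝ) :
    IC μ X Y r ↔ ∀ v, 0 < varianceForm (atomProb μ X x) v →
      covarianceForm (jointProb μ X Y x) (atomProb μ X x) v
        = r * varianceForm (atomProb μ X x) v := by
  have hcorr (g : ℝ → ℝ) (hg : 0 < varianceForm (atomProb μ X x) (g ∘ x)) :
      corr μ (g ∘ X) (g ∘ Y) = r ↔ covarianceForm (jointProb μ X Y x) (atomProb μ X x) (g ∘ x)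
        = r * varianceForm (atomProb μ X x) (g ∘ x) := by
    rw [corr_comp_eq hXm hYm hx hX hY hYX, div_eq_iff hg.ne']
  constructor
  · rintro ⟨-, hIC⟩ v hv
    obtain ⟨g, hgm, rfl⟩ := exists_measurable_comp_eq hx v
    refine (hcorr g hv).1 (hIC g ⟨hgm, memLp_comp_of_ae_mem_range hXm hx hX g 2,
      memLp_comp_of_ae_mem_range hYm hx hY g 2, ?_, ?_⟩)
    · rwa [variance_comp_eq hXm hx hX]
    · rwa [variance_comp_eq hYm hx hY, hYX]
  · intro h
    have hid : 0 < varianceForm (atomProb μ X x) x := by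
      obtain ⟨i, j, hij⟩ := exists_pair_ne ι
      rw [varianceForm_pos_iff hp (sum_atomProb hXm hx hX)]
      exact fun hconst => hij (hx ((congrFun hconst i).trans (congrFun hconst j).symm))
    refine ⟨(hcorr id hid).2 (h _ hid), fun g hg => (hcorr g ?_).2 (h _ ?_)⟩ <;>
      rw [← variance_comp_eq hXm hx hX] <;> exact hg.2.2.2.1

end InvariantCorrelation

/-- Let `X, Y` be identically distributed, taking values `x₁ < ⋯ < x_n` with
probabilities `p_i > 0`, `P` the joint probability matrix and `D = diag(p)`. Then for
`r ∈ [-1,1]`, `(X,Y) ∈ IC_r` iff `(P + Pᵀ)/2 = r D + (1-r) p pᵀ`; and in that case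
`r̲_p ≤ r ≤ 1`, i.e. `-p_j/(1-p_j) ≤ r` for all `j`, `1 - 1/(p_i p_j) ≤ r` for all `i ≠ j`,
and `r ≤ 1`. -/
theorem ic_finite_identical_characterization
    (μ : Measure Ω) [IsProbabilityMeasure μ] (X Y : Ω → ℝ)
    (hXm : Measurable X) (hYm : Measurable Y)
    (n : ℕ) (hn : 2 ≤ n) (x : Fin n → ℝ) (hx : StrictMono x)
    (hident : ∀ i, μ {ω | X ω = x i} = μ {ω | Y ω = x i})
    (hXsupp : μ {ω | X ω ∈ Set.range x} = 1)
    (hYsupp : μ {ω | Y ω ∈ Set.range x} = 1)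
    (p : Fin n → ℝ) (hpdef : ∀ i, p i = (μ {ω | X ω = x i}).toReal)
    (hppos : ∀ i, 0 < p i)
    (P : Matrix (Fin n) (Fin n) ℝ)
    (hPdef : ∀ i j, P i j = (μ {ω | X ω = x i ∧ Y ω = x j}).toReal) :
    ∀ r ∈ Set.Icc (-1 : ℝ) 1,
      (IC μ X Y r ↔
        (2 : ℝ)⁻¹ • (P + Pᵀ) = r • Matrix.diagonal p + (1 - r) • vecMulVec p p) ∧
      (IC μ X Y r →
        (∀ j, -(p j) / (1 - p j) ≤ r) ∧
        (∀ i j, i ≠ j → 1 - 1 / (p i * p j) ≤ r) ∧ r ≤ 1) := by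
  intro r hr
  have hae {Z : Ω → ℝ} (hZm : Measurable Z) (hZ : μ {ω | Z ω ∈ Set.range x} = 1) :
      ∀ᵐ ω ∂μ, Z ω ∈ Set.range x :=
    (ae_iff_measure_eq (hZm (Set.finite_range x).measurableSet).nullMeasurableSet).2
      (hZ.trans measure_univ.symm)
  have hX := hae hXm hXsupp
  have hY := hae hYm hYsupp
  have hinj := hx.injective
  have : Nontrivial (Fin n) := Fin.nontrivial_iff_two_le.2 hn
  obtain rfl : p = atomProb μ X x := funext hpdef
  obtain rfl : P = jointProb μ X Y x := Matrix.ext hPdef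
  have hYX : atomProb μ Y x = atomProb μ X x :=
    funext fun i => congrArg ENNReal.toReal (hident i).symm
  have hp1 := sum_atomProb hXm hinj hX
  have hIC : IC μ X Y r ↔ _ := (ic_iff_forall_covarianceForm hXm hYm hinj hX hY hYX hppos r).trans
    (symmetrization_eq_iff hppos hp1 (sum_jointProb hXm hYm hinj hX hY) r).symm
  have hplt1 (i : Fin n) : atomProb μ X x i < 1 := by
    obtain ⟨j, hji⟩ := exists_ne i
    exact hp1 ▸ Finset.single_lt_sum hji (Finset.mem_univ i) (Finset.mem_univ j) (hppos j)
      fun k _ _ => (hppos k).le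
  refine ⟨hIC, fun h => ?_⟩
  obtain ⟨hdiag, hoff⟩ := lower_bounds_of_symmetrization_eq (hIC.1 h)
    (fun _ _ => measureReal_nonneg) (fun _ _ => measureReal_le_one) hppos hplt1
  exact ⟨hdiag, hoff, hr.2⟩
end
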